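/- arXiv:1510.05412 — 10 statements merged into one kernel-verified Lean document; each statement's English description precedes it below -/
import Mathlib

section
/- Let G be a locally compact group, μ a bounded regular Borel measure on G that is singular with respect to a left Haar measure λ on G, and U a compact neighbourhood of the identity. Then μ ⊥ (μ ∗ δ_x) (i.e., μ is mutually singular with its right translate by x) for λ-almost all x in U. -/
/-!
Let `μ` be carried by `F = ⋃ n, K n` with every `K n` compact and `lam`-null. Then `μ ∗ δ_x` is
carried by `F x`, so it suffices that `μ (K x) = 0` for `lam`-a.e. `x ∈ U`. By Fubini,
`∫_U μ (K x) dlam(x) = ∫ lam (U ∩ K⁻¹ y) dμ(y)`, and `K⁻¹ y` is `lam`-null because on functions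
supported in a fixed compact set the left Haar measure `lam` is dominated by the right Haar
measure `lam.inv`. As `G` need not be second countable, `1_K` is replaced by continuous compactly
supported majorants, which are measurable on `G × G`, with `lam`-integrals tending to `0`.
-/

open MeasureTheory Topology

open Set Filter MeasureTheory.Measure
open scoped ENNReal

theorem ae_eq_zero_of_forall_ae_le_of_tendsto_lintegral {α : Type*} [MeasurableSpace α]
    {ν : Measure α} {F : α → ℝ≥0∞} {h : ℕ → α → ℝ≥0∞} (h_meas : ∀ n, Measurable (h n))
    (hFh : ∀ n, F ≤ᵐ[ν] h n) (h_lim : Tendsto (fun n ↦ ∫⁻ x, h n x ∂ν) atTop (𝓝 0)) :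
    F =ᵐ[ν] 0 := by
  have h_inf : ∫⁻ x, ⨅ n, h n x ∂ν = 0 :=
    le_antisymm (ge_of_tendsto' h_lim fun n ↦ lintegral_mono fun x ↦ iInf_le _ n) bot_le
  filter_upwards [ae_all_iff.2 hFh, (lintegral_eq_zero_iff (.iInf h_meas)).1 h_inf]
    with x hFx h_infx
  exact le_antisymm ((le_iInf hFx).trans_eq h_infx) bot_le

theorem MeasureTheory.Measure.MutuallySingular.exists_isCompact_null_measure_compl_iUnion_eq_zero
    {α : Type*} [TopologicalSpace α] [T2Space α] [MeasurableSpace α] [OpensMeasurableSpace α]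
    {μ ν : Measure α} [IsFiniteMeasure μ] [InnerRegularCompactLTTop μ] (h : μ ⟂ₘ ν) :
    ∃ K : ℕ → Set α, (∀ n, IsCompact (K n)) ∧ (∀ n, ν (K n) = 0) ∧ μ (⋃ n, K n)ᶜ = 0 := by
  obtain ⟨s, hs, hμs, hνs⟩ := h
  have hK : ∀ n : ℕ, ∃ K ⊆ sᶜ, IsCompact K ∧ μ (sᶜ \ K) < (n : ℝ≥0∞)⁻¹ := fun n ↦
    hs.compl.exists_isCompact_sdiff_lt (measure_ne_top μ _) (ENNReal.inv_ne_zero.2 (by simp))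
  choose K hKs hKc hμK using hK
  refine ⟨K, hKc, fun n ↦ measure_mono_null (hKs n) hνs, ?_⟩
  have h_diff : μ (sᶜ \ ⋃ n, K n) = 0 :=
    le_antisymm (ge_of_tendsto' ENNReal.tendsto_inv_nat_nhds_zero fun n ↦
      (measure_mono (sdiff_subset_sdiff_right (subset_iUnion K n))).trans (hμK n).le) bot_le
  refine measure_mono_null (fun x hx ↦ ?_) (measure_union_null hμs h_diff)
  by_cases hxs : x ∈ s
  exacts [Or.inl hxs, Or.inr ⟨hxs, hx⟩]

theorem mutuallySingular_map_mul_right_of_measure_compl_eq_zero {G : Type*} [Group G]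
    [MeasurableSpace G] [MeasurableMul G] {μ : Measure G} {F : Set G} (hF : MeasurableSet F)
    (hμF : μ Fᶜ = 0) {x : G} (hx : μ ((· * x⁻¹) ⁻¹' F) = 0) : μ ⟂ₘ μ.map (· * x) := by
  refine ⟨(· * x⁻¹) ⁻¹' F, measurable_mul_const _ hF, hx, ?_⟩
  rw [map_apply (measurable_mul_const x) (measurable_mul_const _ hF).compl]
  simpa [preimage_preimage] using hμF

section TopologicalGroup

variable {G : Type*} [Group G] [TopologicalSpace G] [IsTopologicalGroup G]
  [MeasurableSpace G] [BorelSpace G]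

theorem integral_apply_inv_mul_pos {ν : Measure G} [IsFiniteMeasureOnCompacts ν]
    [ν.IsOpenPosMeasure] {g : G → ℝ}
    (hg : Continuous g) (h'g : HasCompactSupport g) (g_nonneg : 0 ≤ g) {x₀ : G} (g_pos : g x₀ ≠ 0)
    (y : G) : 0 < ∫ z, g (z⁻¹ * y) ∂ν := by
  have hg_y : Continuous fun z ↦ g (z⁻¹ * y) := hg.comp (continuous_inv.mul continuous_const)
  refine (integral_pos_iff_support_of_nonneg (f := fun z ↦ g (z⁻¹ * y))
    (fun z ↦ g_nonneg (z⁻¹ * y)) ?_).2 ?_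
  · exact hg_y.integrable_of_hasCompactSupport
      (h'g.comp_homeomorph ((Homeomorph.inv G).trans (Homeomorph.mulRight y)))
  · exact hg_y.isOpen_support.measure_pos ν ⟨y * x₀⁻¹, by simpa using g_pos⟩

theorem measurable_uncurry_ofReal_mul_apply_mul_inv {φ f : G → ℝ} (hφ : Continuous φ)
    (hφc : HasCompactSupport φ) (hf : Continuous f) (hfc : HasCompactSupport f) :
    Measurable (Function.uncurry fun x y : G ↦ ENNReal.ofReal (φ x * f (y * x⁻¹))) := by
  refine ENNReal.measurable_ofReal.comp (HasCompactSupport.measurable_of_prod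
    ((hφ.comp continuous_fst).mul (hf.comp (continuous_snd.mul continuous_fst.inv))) ?_)
  refine HasCompactSupport.intro (hφc.prod (hfc.mul hφc)) fun ⟨x, y⟩ hxy ↦ ?_
  by_contra h
  obtain ⟨hφx, hfy⟩ := mul_ne_zero_iff.1 h
  refine hxy ⟨subset_tsupport _ hφx, ?_⟩
  simpa using mul_mem_mul (subset_tsupport _ hfy) (subset_tsupport _ hφx)

theorem setLIntegral_lintegral_ofReal_mul_apply_mul_inv_le (lam μ : Measure G)
    [IsFiniteMeasureOnCompacts lam] [IsFiniteMeasure μ]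
    {U : Set G} (hU : lam U ≠ ∞) {φ f : G → ℝ} (hφ : Continuous φ) (hφc : HasCompactSupport φ)
    (hφ0 : 0 ≤ φ) (hf : Continuous f) (hfc : HasCompactSupport f) (hf0 : 0 ≤ f) {B : ℝ}
    (hB : ∀ y, ∫ x, φ x * f (y * x⁻¹) ∂lam ≤ B) :
    ∫⁻ x in U, ∫⁻ y, ENNReal.ofReal (φ x * f (y * x⁻¹)) ∂μ ∂lam ≤ μ univ * ENNReal.ofReal B := by
  have : Fact (lam U < ∞) := ⟨hU.lt_top⟩
  rw [lintegral_lintegral_swap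
    (measurable_uncurry_ofReal_mul_apply_mul_inv hφ hφc hf hfc).aemeasurable]
  refine (lintegral_mono (g := fun _ ↦ ENNReal.ofReal B) fun y ↦ ?_).trans_eq
    (by rw [lintegral_const, mul_comm])
  refine (setLIntegral_le_lintegral U _).trans ?_
  rw [← ofReal_integral_eq_lintegral_ofReal _ (.of_forall fun x ↦ mul_nonneg (hφ0 x) (hf0 _))]
  · exact ENNReal.ofReal_le_ofReal (hB y)
  · exact (hφ.mul (hf.comp (continuous_const.mul continuous_inv))).integrable_of_hasCompactSupport
      hφc.mul_right

variable [LocallyCompactSpace G]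

theorem exists_integral_le_mul_integral_of_tsupport_subset {μ ν : Measure G}
    [IsFiniteMeasureOnCompacts μ] [IsFiniteMeasureOnCompacts ν] [μ.IsMulLeftInvariant]
    [ν.IsMulRightInvariant] [ν.IsOpenPosMeasure] {L : Set G} (hL : IsCompact L) :
    ∃ C, 0 ≤ C ∧ ∀ f : G → ℝ, Continuous f → 0 ≤ f → tsupport f ⊆ L →
      ∫ x, f x ∂μ ≤ C * ∫ x, f x ∂ν := by
  obtain ⟨g, g_one, -, g_comp, g_mem⟩ :=
    exists_continuous_one_zero_of_isCompact isCompact_singleton isClosed_empty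
      (disjoint_empty {(1 : G)})
  have g_nonneg : 0 ≤ ⇑g := fun x ↦ (g_mem x).1
  have g_pos : g 1 ≠ 0 := by simp [g_one rfl]
  set D : G → ℝ := fun y ↦ ∫ z, g (z⁻¹ * y) ∂ν
  have D_pos : ∀ y, 0 < D y := integral_apply_inv_mul_pos g.continuous g_comp g_nonneg g_pos
  obtain ⟨m, hm⟩ := hL.exists_bound_of_continuousOn
    ((continuous_integral_apply_inv_mul g.continuous g_comp).inv₀
      fun y ↦ (D_pos y).ne').continuousOn
  refine ⟨max m 0 * ∫ x, g x ∂μ, mul_nonneg (le_max_right _ _) (integral_nonneg g_nonneg),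
    fun f hf f_nonneg hfL ↦ ?_⟩
  have hf_int : Integrable f ν :=
    hf.integrable_of_hasCompactSupport (hL.of_isClosed_subset (isClosed_tsupport f) hfL)
  have h_density : ∀ y, f y * (D y)⁻¹ ≤ max m 0 * f y := fun y ↦ by
    by_cases hy : y ∈ L
    · have hDy := hm y hy
      rw [Pi.inv_apply, norm_inv, Real.norm_of_nonneg (D_pos y).le] at hDy
      rw [mul_comm]
      exact mul_le_mul_of_nonneg_right (hDy.trans (le_max_left _ _)) (f_nonneg y)
    · simp [image_eq_zero_of_notMem_tsupport fun h ↦ hy (hfL h)]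
  -- Mathlib's comparison formula: `∫ f ∂μ = (∫ f / D ∂ν) * ∫ g ∂μ`, and `1 / D ≤ m` on `L`.
  rw [integral_isMulLeftInvariant_isMulRightInvariant_combo (μ := μ) (ν := ν) hf
    (hL.of_isClosed_subset (isClosed_tsupport f) hfL) g.continuous g_comp g_nonneg g_pos]
  calc (∫ y, f y * (D y)⁻¹ ∂ν) * ∫ x, g x ∂μ ≤ (∫ y, max m 0 * f y ∂ν) * ∫ x, g x ∂μ :=
        mul_le_mul_of_nonneg_right (integral_mono_of_nonneg
          (.of_forall fun y ↦ mul_nonneg (f_nonneg y) (inv_nonneg.2 (D_pos y).le))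
          (hf_int.const_mul _) (.of_forall h_density)) (integral_nonneg g_nonneg)
    _ = (max m 0 * ∫ x, g x ∂μ) * ∫ x, f x ∂ν := by rw [integral_const_mul]; ring

theorem IsCompact.exists_isOpen_lt_of_lt_of_isHaarMeasure (lam : Measure G) [lam.IsHaarMeasure]
    {K : Set G} (hK : IsCompact K) {r : ℝ≥0∞} (hr : lam K < r) :
    ∃ O, K ⊆ O ∧ IsOpen O ∧ lam O < r := by
  set c := haarScalarFactor lam haar
  have hc : (c : ℝ≥0∞) ≠ 0 := by
    exact_mod_cast (haarScalarFactor_pos_of_isHaarMeasure lam haar).ne'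
  have h_haar : haar K < r / c := by
    rwa [ENNReal.lt_div_iff_mul_lt (.inl hc) (.inl ENNReal.coe_ne_top), mul_comm, ← smul_eq_mul,
      ← ENNReal.smul_def, ← measure_isMulInvariant_eq_smul_of_isCompact_closure lam haar hK.closure]
  obtain ⟨O, hKO, hO, hO_lt⟩ := hK.exists_isOpen_lt_of_lt _ h_haar
  refine ⟨O, hKO, hO, ?_⟩
  rw [measure_isHaarMeasure_eq_smul_of_isOpen lam haar hO, ENNReal.smul_def, smul_eq_mul]
  calc (c : ℝ≥0∞) * haar O < c * (r / c) := by gcongr; exact ENNReal.coe_ne_top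
    _ ≤ r := ENNReal.mul_div_le

theorem IsCompact.exists_continuous_eqOn_one_ofReal_integral_lt (lam : Measure G)
    [lam.IsHaarMeasure] {K : Set G} (hK : IsCompact K) {r : ℝ≥0∞} (hr : lam K < r) :
    ∃ f : C(G, ℝ), EqOn f 1 K ∧ HasCompactSupport f ∧ (∀ x, f x ∈ Icc 0 1) ∧
      ENNReal.ofReal (∫ x, f x ∂lam) < r := by
  obtain ⟨O, hKO, hO, hlamO⟩ := hK.exists_isOpen_lt_of_lt_of_isHaarMeasure lam hr
  obtain ⟨f, hfK, hfO, hfc, hf01⟩ := exists_continuous_one_zero_of_isCompact hK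
    hO.isClosed_compl (disjoint_compl_right_iff_subset.2 hKO)
  exact ⟨f, hfK, hfc, hf01,
    (integral_le_measure (fun x _ ↦ (hf01 x).2) fun x hx ↦ (hfO hx).le).trans_lt hlamO⟩

theorem exists_integral_mul_apply_mul_inv_le (lam : Measure G) [lam.IsHaarMeasure] {φ : G → ℝ}
    (hφ : Continuous φ) (hφc : HasCompactSupport φ) (hφ0 : 0 ≤ φ) (hφ1 : φ ≤ 1) :
    ∃ C, 0 ≤ C ∧ ∀ f : G → ℝ, Continuous f → HasCompactSupport f → 0 ≤ f → ∀ y,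
      ∫ x, φ x * f (y * x⁻¹) ∂lam ≤ C * ∫ x, f x ∂lam := by
  obtain ⟨C, hC0, hC⟩ :=
    exists_integral_le_mul_integral_of_tsupport_subset (μ := lam) (ν := lam.inv) hφc
  refine ⟨C, hC0, fun f hf hfc hf0 y ↦ ?_⟩
  have hfy : Integrable (fun x ↦ f (y * x)) lam :=
    (hf.comp (continuous_const_mul y)).integrable_of_hasCompactSupport
      (hfc.comp_homeomorph (Homeomorph.mulLeft y))
  calc ∫ x, φ x * f (y * x⁻¹) ∂lam ≤ C * ∫ x, φ x * f (y * x⁻¹) ∂lam.inv :=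
        hC _ (hφ.mul (hf.comp (continuous_const.mul continuous_inv)))
          (fun x ↦ mul_nonneg (hφ0 x) (hf0 _)) tsupport_mul_subset_left
    _ = C * ∫ x, φ x⁻¹ * f (y * x) ∂lam := by
        rw [show lam.inv = map (MeasurableEquiv.inv G) lam from rfl, integral_map_equiv]
        simp
    _ ≤ C * ∫ x, f (y * x) ∂lam :=
        mul_le_mul_of_nonneg_left (integral_mono_of_nonneg
          (.of_forall fun x ↦ mul_nonneg (hφ0 x⁻¹) (hf0 _)) hfy
          (.of_forall fun x ↦ mul_le_of_le_one_left (hf0 _) (hφ1 x⁻¹))) hC0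
    _ = C * ∫ x, f x ∂lam := by rw [integral_mul_left_eq_self]

theorem ae_restrict_measure_preimage_mul_inv_eq_zero [T2Space G] (lam : Measure G)
    [lam.IsHaarMeasure] (μ : Measure G) [IsFiniteMeasure μ] {U K : Set G} (hU : IsCompact U)
    (hK : IsCompact K) (hlamK : lam K = 0) :
    ∀ᵐ x ∂lam.restrict U, μ ((· * x⁻¹) ⁻¹' K) = 0 := by
  obtain ⟨φ, hφU, -, hφc, hφ01⟩ :=
    exists_continuous_one_zero_of_isCompact hU isClosed_empty (disjoint_empty U)
  obtain ⟨C, hC0, hC⟩ := exists_integral_mul_apply_mul_inv_le lam φ.continuous hφc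
    (fun x ↦ (hφ01 x).1) (fun x ↦ (hφ01 x).2)
  choose f hfK hfc hf01 hf_int using fun n : ℕ ↦
    hK.exists_continuous_eqOn_one_ofReal_integral_lt lam
      (hlamK ▸ ENNReal.inv_pos.2 (ENNReal.natCast_ne_top n))
  refine ae_eq_zero_of_forall_ae_le_of_tendsto_lintegral
    (h := fun n x ↦ ∫⁻ y, ENNReal.ofReal (φ x * f n (y * x⁻¹)) ∂μ)
    (fun n ↦ (measurable_uncurry_ofReal_mul_apply_mul_inv φ.continuous hφc (f n).continuous
      (hfc n)).lintegral_prod_right) (fun n ↦ ?_) ?_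
  · filter_upwards [ae_restrict_mem hU.measurableSet] with x hx
    rw [← lintegral_indicator_one (measurable_mul_const _ hK.isClosed.measurableSet)]
    refine lintegral_mono fun y ↦ ?_
    by_cases hy : y * x⁻¹ ∈ K
    · simp [indicator_of_mem (show y ∈ (· * x⁻¹) ⁻¹' K from hy), hφU hx, hfK n hy]
    · simp [indicator_of_notMem (show y ∉ (· * x⁻¹) ⁻¹' K from hy)]
  have h_lim : Tendsto (fun n : ℕ ↦ μ univ * ENNReal.ofReal C * (n : ℝ≥0∞)⁻¹) atTop (𝓝 0) := by
    simpa using ENNReal.Tendsto.const_mul ENNReal.tendsto_inv_nat_nhds_zero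
      (.inr (by finiteness) : (0 : ℝ≥0∞) ≠ 0 ∨ μ univ * ENNReal.ofReal C ≠ ∞)
  refine tendsto_of_tendsto_of_tendsto_of_le_of_le tendsto_const_nhds h_lim
    (fun _ ↦ zero_le) fun n ↦ ?_
  calc _ ≤ μ univ * ENNReal.ofReal (C * ∫ x, f n x ∂lam) :=
        setLIntegral_lintegral_ofReal_mul_apply_mul_inv_le lam μ hU.measure_lt_top.ne
          φ.continuous hφc (fun x ↦ (hφ01 x).1) (f n).continuous (hfc n) (fun x ↦ (hf01 n x).1)
          (hC _ (f n).continuous (hfc n) (fun x ↦ (hf01 n x).1))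
    _ ≤ μ univ * ENNReal.ofReal C * (n : ℝ≥0∞)⁻¹ := by
        rw [ENNReal.ofReal_mul hC0, mul_assoc]
        gcongr
        exact (hf_int n).le

end TopologicalGroup

theorem stmt_0_general {G : Type*} [Group G] [TopologicalSpace G] [IsTopologicalGroup G]
    [LocallyCompactSpace G] [T2Space G] [MeasurableSpace G] [BorelSpace G]
    (lam : Measure G) [lam.IsHaarMeasure]
    (μ : Measure G) [IsFiniteMeasure μ] [μ.Regular]
    (hsing : μ ⟂ₘ lam)
    (U : Set G) (hUc : IsCompact U) :
    ∀ᵐ x ∂(lam.restrict U), μ ⟂ₘ μ.map (· * x) := by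
  obtain ⟨K, hKc, hlamK, hμK⟩ := hsing.exists_isCompact_null_measure_compl_iUnion_eq_zero
  have h_null : ∀ᵐ x ∂(lam.restrict U), ∀ n, μ ((· * x⁻¹) ⁻¹' K n) = 0 :=
    ae_all_iff.2 fun n ↦ ae_restrict_measure_preimage_mul_inv_eq_zero lam μ hUc (hKc n) (hlamK n)
  filter_upwards [h_null] with x hx
  refine mutuallySingular_map_mul_right_of_measure_compl_eq_zero
    (.iUnion fun n ↦ (hKc n).isClosed.measurableSet) hμK ?_
  rw [preimage_iUnion]
  exact measure_iUnion_null hx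

/-- If `μ` is a bounded regular Borel measure on a locally compact group `G`
that is singular with respect to a left Haar measure `lam`, and `U` is a compact neighbourhood
of the identity, then `μ ⟂ μ ∗ δ_x` for `lam`-almost every `x ∈ U`. Here the right translate
`μ ∗ δ_x` is the pushforward of `μ` under right multiplication by `x`. -/
theorem stmt_0 {G : Type*} [Group G] [TopologicalSpace G] [IsTopologicalGroup G]
    [LocallyCompactSpace G] [T2Space G] [MeasurableSpace G] [BorelSpace G]
    (lam : Measure G) [lam.IsHaarMeasure]
    (μ : Measure G) [IsFiniteMeasure μ] [μ.Regular]
    (hsing : μ ⟂ₘ lam)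
    (U : Set G) (hUc : IsCompact U) (hU : U ∈ 𝓝 (1 : G)) :
    ∀ᵐ x ∂(lam.restrict U), μ ⟂ₘ μ.map (· * x) :=
  stmt_0_general lam μ hsing U hUc
end

section
/- Let G be a locally compact group, μ a bounded Radon measure on G, ε > 0, and H ⊆ G a countable set such that the right translates μ ∗ δ_h are pairwise mutually singular for h ∈ H. Then there is a compact set C ⊆ G such that |μ|(G \ C) < ε and the sets C·h are pairwise disjoint for h ∈ H. -/
open MeasureTheory Set

/-!
If `μ.map f ⟂ₘ μ.map g` is witnessed by a set `S`, then `f` maps `f ⁻¹' Sᶜ ∩ g ⁻¹' S` into `Sᶜ`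
and `g` maps it into `S`; this set is conull. Intersecting such sets over the countably many
pairs of distinct translations gives a conull set with pairwise disjoint translates, and inner
regularity shrinks it to a compact set of almost full measure.
-/

namespace MeasureTheory

variable {α β ι : Type*} [MeasurableSpace α] [MeasurableSpace β] {μ : Measure α}

theorem Measure.MutuallySingular.exists_measure_compl_eq_zero_disjoint_image {f g : α → β}
    (hf : Measurable f) (hg : Measurable g) (h : μ.map f ⟂ₘ μ.map g) :
    ∃ A, MeasurableSet A ∧ μ Aᶜ = 0 ∧ Disjoint (f '' A) (g '' A) := by
  obtain ⟨S, hS, hfS, hgS⟩ := h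
  rw [Measure.map_apply hf hS] at hfS
  rw [Measure.map_apply hg hS.compl] at hgS
  refine ⟨f ⁻¹' Sᶜ ∩ g ⁻¹' S, (hf hS.compl).inter (hg hS), ?_, ?_⟩
  · rw [compl_inter, preimage_compl, compl_compl, ← preimage_compl]
    exact measure_union_null hfS hgS
  · exact disjoint_compl_left.mono (image_subset_iff.2 inter_subset_left)
      (image_subset_iff.2 inter_subset_right)

theorem exists_measure_compl_eq_zero_pairwise_disjoint_image {f : ι → α → β} {I : Set ι}
    (hI : I.Countable) (hf : ∀ i ∈ I, Measurable (f i))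
    (h : I.Pairwise fun i j => μ.map (f i) ⟂ₘ μ.map (f j)) :
    ∃ A, MeasurableSet A ∧ μ Aᶜ = 0 ∧ I.Pairwise fun i j => Disjoint (f i '' A) (f j '' A) := by
  have hpair : ∀ p ∈ I.offDiag, ∃ A, MeasurableSet A ∧ μ Aᶜ = 0 ∧
      Disjoint (f p.1 '' A) (f p.2 '' A) := fun p hp =>
    (h hp.1 hp.2.1 hp.2.2).exists_measure_compl_eq_zero_disjoint_image (hf _ hp.1) (hf _ hp.2.1)
  choose! A hAm hA0 hAd using hpair
  have hoff : I.offDiag.Countable := (hI.prod hI).mono (offDiag_subset_prod I)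
  refine ⟨⋂ p ∈ I.offDiag, A p, .biInter hoff hAm, ?_, fun i hi j hj hij => ?_⟩
  · rw [compl_iInter₂]
    exact (measure_biUnion_null_iff hoff).2 hA0
  · have hsub := biInter_subset_of_mem (t := A) (show (i, j) ∈ I.offDiag from ⟨hi, hj, hij⟩)
    exact (hAd _ ⟨hi, hj, hij⟩).mono (image_mono hsub) (image_mono hsub)

variable [TopologicalSpace α] [OpensMeasurableSpace α] [T2Space α]

theorem MeasurableSet.exists_isCompact_subset_measure_compl_lt [IsFiniteMeasure μ]
    [μ.InnerRegularCompactLTTop] {A : Set α} (hA : MeasurableSet A) (hA0 : μ Aᶜ = 0)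
    {ε : ENNReal} (hε : ε ≠ 0) : ∃ K ⊆ A, IsCompact K ∧ μ Kᶜ < ε := by
  obtain ⟨K, hKA, hK, hAK⟩ := hA.exists_isCompact_sdiff_lt (measure_ne_top μ A) hε
  refine ⟨K, hKA, hK, ?_⟩
  rwa [← measure_inter_conull hA0, inter_comm, ← sdiff_eq]

theorem exists_isCompact_measure_compl_lt_pairwise_disjoint_image [IsFiniteMeasure μ]
    [μ.InnerRegularCompactLTTop] {f : ι → α → β} {I : Set ι} (hI : I.Countable)
    (hf : ∀ i ∈ I, Measurable (f i)) (h : I.Pairwise fun i j => μ.map (f i) ⟂ₘ μ.map (f j))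
    {ε : ENNReal} (hε : ε ≠ 0) :
    ∃ K, IsCompact K ∧ μ Kᶜ < ε ∧ I.Pairwise fun i j => Disjoint (f i '' K) (f j '' K) := by
  obtain ⟨A, hA, hA0, hAd⟩ := exists_measure_compl_eq_zero_pairwise_disjoint_image hI hf h
  obtain ⟨K, hKA, hK, hKε⟩ := hA.exists_isCompact_subset_measure_compl_lt hA0 hε
  exact ⟨K, hK, hKε, fun i hi j hj hij =>
    (hAd hi hj hij).mono (image_mono hKA) (image_mono hKA)⟩

end MeasureTheory

theorem stmt_1_general {G : Type*} [Group G] [TopologicalSpace G] [IsTopologicalGroup G]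
    [T2Space G] [MeasurableSpace G] [BorelSpace G]
    (μ : Measure G) [IsFiniteMeasure μ] [μ.Regular]
    (ε : ENNReal) (hε : 0 < ε)
    (H : Set G) (hHc : H.Countable)
    (hsing : H.Pairwise fun h h' => μ.map (· * h) ⟂ₘ μ.map (· * h')) :
    ∃ C : Set G, IsCompact C ∧ μ Cᶜ < ε ∧
      H.Pairwise fun h h' => Disjoint ((· * h) '' C) ((· * h') '' C) :=
  exists_isCompact_measure_compl_lt_pairwise_disjoint_image hHc
    (fun h _ => measurable_mul_const h) hsing hε.ne'

/-- Let `μ` be a bounded (nonnegative) Radon measure on a locally compact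
group `G`, `ε > 0`, and `H ⊆ G` countable such that the right translates `μ ∗ δ_h`, `h ∈ H`,
are pairwise mutually singular. Then there is a compact set `C ⊆ G` with `μ(G \ C) < ε`
such that the sets `C·h`, `h ∈ H`, are pairwise disjoint. -/
theorem stmt_1 {G : Type*} [Group G] [TopologicalSpace G] [IsTopologicalGroup G]
    [LocallyCompactSpace G] [T2Space G] [MeasurableSpace G] [BorelSpace G]
    (μ : Measure G) [IsFiniteMeasure μ] [μ.Regular]
    (ε : ENNReal) (hε : 0 < ε)
    (H : Set G) (hHc : H.Countable)
    (hsing : H.Pairwise fun h h' => μ.map (· * h) ⟂ₘ μ.map (· * h')) :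
    ∃ C : Set G, IsCompact C ∧ μ Cᶜ < ε ∧
      H.Pairwise fun h h' => Disjoint ((· * h) '' C) ((· * h') '' C) :=
  stmt_1_general μ ε hε H hHc hsing
end

section
/- Let G be a locally compact group with left Haar measure λ, and suppose μ is a nonzero bounded Radon measure on G whose orbit {μ ∗ δ_x : x ∈ G} under right translations is norm-separable in the space of bounded measures. Then μ is absolutely continuous with respect to λ. -/
/-!
Fix `ε > 0` and a compact Haar-null set `K`. Countably many classes
`{x | μ ∗ δ_x is ε-close to μ ∗ δ_t}` cover `G`, so one of them meets a compact neighbourhood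
of `1` in a set of positive Haar measure. For `y` in that class the translate `s = K y` is still
Haar-null, and Fubini against Urysohn functions squeezing `s` shows that `x ↦ μ (s x⁻¹)` vanishes
Haar-almost everywhere on compact sets; so some `x` in the same class has `μ (s x⁻¹) = 0`, whence
`μ K = μ (s y⁻¹) ≤ 2 ε`. Inner regularity of `μ` reduces absolute continuity to compact sets.
-/

open MeasureTheory Set Function
open scoped Pointwise ENNReal

namespace MeasureTheory

/-- For finite measures this says, up to a factor `2`, that the total variation distance is at
most `ε`. -/
def Measure.SetwiseClose {α : Type*} [MeasurableSpace α] (μ ν : Measure α) (ε : ℝ≥0∞) : Prop :=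
  ∀ s, MeasurableSet s → μ s ≤ ν s + ε ∧ ν s ≤ μ s + ε

variable {G : Type*} [Group G] [TopologicalSpace G] [IsTopologicalGroup G]

theorem hasCompactSupport_uncurry_mul_comp_mul_right {ψ φ : G → ℝ}
    (hψ : HasCompactSupport ψ) (hφ : HasCompactSupport φ) :
    HasCompactSupport (uncurry fun x z : G => ψ x * φ (z * x)) := by
  refine HasCompactSupport.intro (hψ.prod (hφ.mul hψ.inv)) ?_
  rintro ⟨x, z⟩ hxz
  by_cases hx : x ∈ tsupport ψ
  · have hzx : z * x ∉ tsupport φ := fun h =>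
      hxz ⟨hx, by simpa using Set.mul_mem_mul h (Set.inv_mem_inv.mpr hx)⟩
    simp [image_eq_zero_of_notMem_tsupport hzx]
  · simp [image_eq_zero_of_notMem_tsupport hx]

variable [MeasurableSpace G] [BorelSpace G]

theorem continuous_integral_comp_mul_right [LocallyCompactSpace G] {μ : Measure G}
    [IsFiniteMeasure μ] {φ : G → ℝ} (hφ : Continuous φ) (hφc : HasCompactSupport φ) :
    Continuous fun x => ∫ z, φ (z * x) ∂μ := by
  have hinv (x : G) : ∫ w, φ (w⁻¹ * x) ∂μ.inv = ∫ z, φ (z * x) ∂μ := by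
    have hg : Continuous fun w : G => φ (w⁻¹ * x) := by fun_prop
    rw [Measure.inv, integral_map measurable_inv.aemeasurable hg.aestronglyMeasurable]
    simp only [inv_inv]
  simpa only [hinv] using continuous_integral_apply_inv_mul (μ := μ.inv) hφ hφc

section Integral

variable {ν μ : Measure G} [IsFiniteMeasureOnCompacts ν] [ν.IsMulLeftInvariant] [IsFiniteMeasure μ]
  {φ : G → ℝ}

/-- The cutoff `ψ` makes the integrand compactly supported on `G × G`, so that Fubini applies
although `ν` need not be σ-finite. -/
theorem integral_mul_integral_comp_mul_right_le {ψ : G → ℝ} (hψ : Continuous ψ)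
    (hψc : HasCompactSupport ψ) (hψ0 : ∀ x, 0 ≤ ψ x) (hψ1 : ∀ x, ψ x ≤ 1)
    (hφ : Continuous φ) (hφc : HasCompactSupport φ) (hφ0 : ∀ x, 0 ≤ φ x) :
    ∫ x, ψ x * ∫ z, φ (z * x) ∂μ ∂ν ≤ μ.real univ * ∫ x, φ x ∂ν := by
  have hinner (z : G) : ∫ x, ψ x * φ (z * x) ∂ν ≤ ∫ x, φ x ∂ν := by
    calc ∫ x, ψ x * φ (z * x) ∂ν
        ≤ ∫ x, φ (z * x) ∂ν := by
          refine integral_mono_of_nonneg (.of_forall fun x => mul_nonneg (hψ0 x) (hφ0 _)) ?_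
            (.of_forall fun x => mul_le_of_le_one_left (hφ0 _) (hψ1 x))
          exact (hφ.comp (continuous_const_mul z)).integrable_of_hasCompactSupport
            (hφc.comp_homeomorph (Homeomorph.mulLeft z))
      _ = ∫ x, φ x ∂ν := integral_mul_left_eq_self φ z
  calc ∫ x, ψ x * ∫ z, φ (z * x) ∂μ ∂ν
      = ∫ z, ∫ x, ψ x * φ (z * x) ∂ν ∂μ := by
        simp_rw [← integral_const_mul]
        exact integral_integral_swap_of_hasCompactSupport (by fun_prop)
          (hasCompactSupport_uncurry_mul_comp_mul_right hψc hφc)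
    _ ≤ ∫ _, ∫ x, φ x ∂ν ∂μ :=
        integral_mono_of_nonneg
          (.of_forall fun z => integral_nonneg fun x => mul_nonneg (hψ0 x) (hφ0 _))
          (integrable_const _) (.of_forall hinner)
    _ = μ.real univ * ∫ x, φ x ∂ν := by rw [integral_const, smul_eq_mul]

theorem setIntegral_integral_comp_mul_right_le [LocallyCompactSpace G] [T2Space G] {k : Set G}
    (hk : IsCompact k) (hφ : Continuous φ) (hφc : HasCompactSupport φ) (hφ0 : ∀ x, 0 ≤ φ x) :
    ∫ x in k, ∫ z, φ (z * x) ∂μ ∂ν ≤ μ.real univ * ∫ x, φ x ∂ν := by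
  obtain ⟨ψ, hψk, -, hψc, hψ01⟩ :=
    exists_continuous_one_zero_of_isCompact hk isClosed_empty (disjoint_empty k)
  have hF := continuous_integral_comp_mul_right (μ := μ) hφ hφc
  have hF0 (x : G) : 0 ≤ ∫ z, φ (z * x) ∂μ := integral_nonneg fun z => hφ0 _
  calc ∫ x in k, ∫ z, φ (z * x) ∂μ ∂ν
      = ∫ x in k, ψ x * ∫ z, φ (z * x) ∂μ ∂ν :=
        setIntegral_congr_fun hk.measurableSet fun x hx => by simp [hψk hx]
    _ ≤ ∫ x, ψ x * ∫ z, φ (z * x) ∂μ ∂ν :=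
        setIntegral_le_integral
          ((ψ.continuous.mul hF).integrable_of_hasCompactSupport hψc.mul_right)
          (.of_forall fun x => mul_nonneg (hψ01 x).1 (hF0 x))
    _ ≤ μ.real univ * ∫ x, φ x ∂ν :=
        integral_mul_integral_comp_mul_right_le ψ.continuous hψc (fun x => (hψ01 x).1)
          (fun x => (hψ01 x).2) hφ hφc hφ0

variable [LocallyCompactSpace G] [T2Space G]

theorem mul_measure_restrict_setOf_le_map_mul_right_le {s V k : Set G} (hs : IsCompact s)
    (hV : IsOpen V) (hsV : s ⊆ V) (hk : IsCompact k) (η : ℝ≥0∞) :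
    η * ν.restrict k {x | η ≤ μ.map (· * x) s} ≤ μ univ * ν V := by
  obtain ⟨φ, hφs, hφV, hφc, hφ01⟩ := exists_continuous_one_zero_of_isCompact hs hV.isClosed_compl
    (disjoint_compl_right_iff_subset.mpr hsV)
  set F : G → ℝ := fun x => ∫ z, φ (z * x) ∂μ
  have hF : Continuous F := continuous_integral_comp_mul_right φ.continuous hφc
  have hmap_le (x : G) : μ.map (· * x) s ≤ ENNReal.ofReal (F x) := by
    rw [Measure.map_apply (measurable_mul_const x) hs.measurableSet]
    refine Integrable.measure_le_integral ?_ (.of_forall fun z => (hφ01 _).1)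
      fun z hz => (hφs hz).symm.le
    exact (φ.continuous.comp (continuous_mul_const x)).integrable_of_hasCompactSupport
      (hφc.comp_homeomorph (Homeomorph.mulRight x))
  calc η * ν.restrict k {x | η ≤ μ.map (· * x) s}
      ≤ η * ν.restrict k {x | η ≤ ENNReal.ofReal (F x)} :=
        mul_le_mul_right (measure_mono fun x hx => le_trans hx (hmap_le x)) η
    _ ≤ ∫⁻ x in k, ENNReal.ofReal (F x) ∂ν :=
        mul_meas_ge_le_lintegral₀ (ENNReal.measurable_ofReal.comp hF.measurable).aemeasurable η
    _ = ENNReal.ofReal (∫ x in k, F x ∂ν) :=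
        (ofReal_integral_eq_lintegral_ofReal (hF.continuousOn.integrableOn_compact hk)
          (.of_forall fun x => integral_nonneg fun z => (hφ01 _).1)).symm
    _ ≤ ENNReal.ofReal (μ.real univ * ∫ x, φ x ∂ν) :=
        ENNReal.ofReal_le_ofReal <|
          setIntegral_integral_comp_mul_right_le hk φ.continuous hφc fun x => (hφ01 x).1
    _ ≤ μ univ * ν V := by
        rw [ENNReal.ofReal_mul measureReal_nonneg, ofReal_measureReal (measure_ne_top μ _)]
        exact mul_le_mul_right (integral_le_measure (fun x _ => (hφ01 x).2)
          fun x hx => (hφV hx).le) _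

theorem measure_restrict_map_mul_right_ge_eq_zero [ν.OuterRegular] {s k : Set G}
    (hs : IsCompact s) (hνs : ν s = 0) (hk : IsCompact k) {η : ℝ≥0∞} (hη0 : η ≠ 0)
    (hηtop : η ≠ ∞) : ν.restrict k {x | η ≤ μ.map (· * x) s} = 0 := by
  refine le_antisymm (ENNReal.le_of_forall_pos_le_add fun δ hδ _ => ?_) bot_le
  obtain ⟨V, hsV, hV, hνV⟩ := s.exists_isOpen_le_add ν
    (ENNReal.div_pos (mul_ne_zero hη0 (ENNReal.coe_ne_zero.mpr hδ.ne')) (measure_ne_top μ univ)).ne'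
  rw [hνs, zero_add] at hνV
  rw [zero_add, ← ENNReal.mul_le_mul_iff_right hη0 hηtop]
  calc η * ν.restrict k {x | η ≤ μ.map (· * x) s}
      ≤ μ univ * ν V := mul_measure_restrict_setOf_le_map_mul_right_le hs hV hsV hk η
    _ ≤ μ univ * (η * δ / μ univ) := mul_le_mul_right hνV _
    _ ≤ η * δ := ENNReal.mul_div_le

theorem ae_restrict_map_mul_right_eq_zero [ν.OuterRegular] {s k : Set G} (hs : IsCompact s)
    (hνs : ν s = 0) (hk : IsCompact k) : ∀ᵐ x ∂ν.restrict k, μ.map (· * x) s = 0 := by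
  have hcover : {x | ¬μ.map (· * x) s = 0} ⊆
      ⋃ n : ℕ, {x | ((n + 1 : ℕ) : ℝ≥0∞)⁻¹ ≤ μ.map (· * x) s} := by
    intro x hx
    obtain ⟨n, hn⟩ := ENNReal.exists_inv_nat_lt hx
    refine mem_iUnion.mpr ⟨n, le_trans ?_ hn.le⟩
    gcongr
    exact_mod_cast n.le_succ
  refine measure_mono_null hcover (measure_iUnion_null fun n => ?_)
  exact measure_restrict_map_mul_right_ge_eq_zero hs hνs hk (by simp) (by simp)

end Integral

section Haar

variable [LocallyCompactSpace G] [T2Space G] {ν μ : Measure G} [ν.IsHaarMeasure]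
  [IsFiniteMeasure μ]

theorem measure_le_add_of_forall_setwiseClose_map_mul_right [ν.Regular] {ε : ℝ≥0∞} {T : Set G}
    (hT : T.Countable)
    (hclose : ∀ x, ∃ t ∈ T, (μ.map (· * x)).SetwiseClose (μ.map (· * t)) ε)
    {K : Set G} (hK : IsCompact K) (hνK : ν K = 0) : μ K ≤ ε + ε := by
  obtain ⟨k, hk, hk1⟩ := exists_compact_mem_nhds (1 : G)
  set A : G → Set G := fun t => {x | (μ.map (· * x)).SetwiseClose (μ.map (· * t)) ε}
  obtain ⟨t, htT, hAt⟩ : ∃ t ∈ T, ν (A t ∩ k) ≠ 0 := by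
    by_contra! h
    refine (Measure.measure_pos_of_mem_nhds ν hk1).ne' (measure_mono_null (fun x hx => ?_)
      ((measure_biUnion_null_iff hT).2 h))
    obtain ⟨t, htT, hxt⟩ := hclose x
    exact mem_biUnion htT ⟨hxt, hx⟩
  obtain ⟨y, hyA, -⟩ := nonempty_of_measure_ne_zero hAt
  set s : Set G := (· * y⁻¹) ⁻¹' K
  have hs : IsCompact s := (Homeomorph.mulRight y⁻¹).isCompact_preimage.2 hK
  have hνs : ν s = 0 := by
    rw [← Measure.map_apply (measurable_mul_const y⁻¹) hK.measurableSet,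
      Measure.measure_isMulInvariant_eq_smul_of_isCompact_closure _ ν hK.closure, hνK, smul_zero]
  obtain ⟨x, hxA, hx0⟩ : ∃ x ∈ A t, μ.map (· * x) s = 0 := by
    by_contra! h
    have hnull := ae_iff.1 (ae_restrict_map_mul_right_eq_zero (μ := μ) hs hνs hk)
    rw [Measure.restrict_apply' hk.measurableSet] at hnull
    exact hAt (measure_mono_null (inter_subset_inter_left k h) hnull)
  have hyK : μ.map (· * y) s = μ K := by
    rw [Measure.map_apply (measurable_mul_const y) hs.measurableSet]
    simp [s, preimage_preimage]
  calc μ K = μ.map (· * y) s := hyK.symm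
    _ ≤ μ.map (· * t) s + ε := (hyA s hs.measurableSet).1
    _ ≤ μ.map (· * x) s + ε + ε := by gcongr; exact (hxA s hs.measurableSet).2
    _ = ε + ε := by rw [hx0, zero_add]

def Measure.IsRightOrbitSeparable (μ : Measure G) : Prop :=
  ∃ T : Set G, T.Countable ∧
    ∀ x, ∀ ε : ℝ≥0∞, 0 < ε → ∃ t ∈ T, (μ.map (· * x)).SetwiseClose (μ.map (· * t)) ε

theorem Measure.IsRightOrbitSeparable.measure_eq_zero_of_isCompact
    (hsep : μ.IsRightOrbitSeparable) {K : Set G} (hK : IsCompact K) (hνK : ν K = 0) :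
    μ K = 0 := by
  obtain ⟨T, hT, hclose⟩ := hsep
  -- `ν` need not be outer regular; the regular Haar measure has the same compact null sets.
  obtain ⟨K₀⟩ : Nonempty (TopologicalSpace.PositiveCompacts G) := inferInstance
  have hK₀ : Measure.haarMeasure K₀ K = 0 := by
    rw [Measure.measure_isMulInvariant_eq_smul_of_isCompact_closure _ ν hK.closure, hνK,
      smul_zero]
  refine le_antisymm (ENNReal.le_of_forall_pos_le_add fun δ hδ _ => ?_) bot_le
  rw [zero_add, ← ENNReal.add_halves (δ : ℝ≥0∞)]
  exact measure_le_add_of_forall_setwiseClose_map_mul_right hT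
    (fun x => hclose x _ (ENNReal.half_pos (ENNReal.coe_ne_zero.mpr hδ.ne'))) hK hK₀

end Haar

end MeasureTheory

theorem stmt_3_general {G : Type*} [Group G] [TopologicalSpace G] [IsTopologicalGroup G]
    [LocallyCompactSpace G] [T2Space G] [MeasurableSpace G] [BorelSpace G]
    (lam : Measure G) [lam.IsHaarMeasure]
    (μ : Measure G) [IsFiniteMeasure μ] [μ.Regular]
    (hsep : ∃ T : Set G, T.Countable ∧ ∀ x : G, ∀ ε : ENNReal, 0 < ε →
      ∃ t ∈ T, ∀ s : Set G, MeasurableSet s →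
        μ.map (· * x) s ≤ μ.map (· * t) s + ε ∧ μ.map (· * t) s ≤ μ.map (· * x) s + ε) :
    μ ≪ lam := by
  refine Measure.AbsolutelyContinuous.mk fun B hB hlamB => ?_
  rw [hB.measure_eq_iSup_isCompact_of_ne_top (measure_ne_top μ B)]
  simp only [ENNReal.iSup_eq_zero]
  exact fun K hKB hK => Measure.IsRightOrbitSeparable.measure_eq_zero_of_isCompact hsep hK
    (measure_mono_null hKB hlamB)

/-- If `μ` is a nonzero bounded Radon measure on a locally compact group `G`
whose orbit `{μ ∗ δ_x : x ∈ G}` under right translation is norm-separable (in total variation),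
then `μ` is absolutely continuous with respect to a left Haar measure `lam`.
Norm-separability of the orbit is expressed by a countable set `T ⊆ G` of translation
parameters approximating every translate uniformly over measurable sets (this is the total
variation distance for nonnegative measures). -/
theorem stmt_3 {G : Type*} [Group G] [TopologicalSpace G] [IsTopologicalGroup G]
    [LocallyCompactSpace G] [T2Space G] [MeasurableSpace G] [BorelSpace G]
    (lam : Measure G) [lam.IsHaarMeasure]
    (μ : Measure G) [IsFiniteMeasure μ] [μ.Regular] (hμ : μ ≠ 0)
    (hsep : ∃ T : Set G, T.Countable ∧ ∀ x : G, ∀ ε : ENNReal, 0 < ε →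
      ∃ t ∈ T, ∀ s : Set G, MeasurableSet s →
        μ.map (· * x) s ≤ μ.map (· * t) s + ε ∧ μ.map (· * t) s ≤ μ.map (· * x) s + ε) :
    μ ≪ lam :=
  stmt_3_general lam μ hsep
end

section
/- Let M be a normed space (of measures) and {D_γ : γ ∈ Γ} a family of subspaces of the space of bounded Radon measures on a locally compact group G such that any two measures from distinct D_γ are mutually singular. If for each γ a functional h_γ in the closed unit ball of D_γ* is given, then there exists a functional h in the closed unit ball of M(G)* that agrees with h_γ on D_γ for every γ ∈ Γ. -/
/-!
On the sum `S` of the subspaces `D γ` the functionals `h γ` glue to a single functional, and it is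
still dominated by the total variation norm: mutual singularity makes the total variation of a
finite sum `∑ μ_γ` with `μ_γ ∈ D γ` the sum of the total variations, so
`∑ h γ μ_γ ≤ ∑ ‖μ_γ‖ = ‖∑ μ_γ‖`. The same estimate shows that the glued functional is well
defined. Hahn–Banach, applied with the sublinear total variation norm, extends it to all of `M(G)`.
-/

open MeasureTheory DirectSum

theorem exists_common_extension_of_le_sublinear {ι E : Type*} [AddCommGroup E] [Module ℝ E]
    (D : ι → Submodule ℝ E) (f : ∀ i, D i →ₗ[ℝ] ℝ) (N : E → ℝ)
    (N_hom : ∀ c : ℝ, 0 < c → ∀ x, N (c • x) = c * N x)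
    (N_add : ∀ x y, N (x + y) ≤ N x + N y)
    (N_sum : ∀ (s : Finset ι) (x : ι → E), (∀ i, x i ∈ D i) →
      ∑ i ∈ s, N (x i) ≤ N (∑ i ∈ s, x i))
    (hf : ∀ i (x : D i), f i x ≤ N x) :
    ∃ g : E →ₗ[ℝ] ℝ, (∀ x, g x ≤ N x) ∧ ∀ i (x : D i), g x = f i x := by
  classical
  set Φ := coeLinearMap D
  set T := toModule ℝ ι ℝ f
  have T_le (y : ⨁ i, D i) : T y ≤ N (Φ y) :=
    calc T y = ∑ i ∈ y.support, f i (y i) := DFinsupp.sumAddHom_apply _ y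
      _ ≤ ∑ i ∈ y.support, N (y i) := Finset.sum_le_sum fun i _ => hf i (y i)
      _ ≤ N (∑ i ∈ y.support, (y i : E)) := N_sum _ _ fun i => (y i).2
      _ = N (Φ y) := by rw [coeLinearMap_eq_dfinsuppSum]; rfl
  have N_zero : N 0 = 0 := by
    have := N_hom 2 two_pos 0
    rw [smul_zero] at this
    linarith
  have ker_le : LinearMap.ker Φ ≤ LinearMap.ker T := fun y hy => by
    rw [LinearMap.mem_ker] at hy ⊢
    have h₁ := T_le y
    have h₂ := T_le (-y)
    rw [hy, N_zero] at h₁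
    rw [map_neg, map_neg, hy, neg_zero, N_zero] at h₂
    linarith
  let F : LinearMap.range Φ →ₗ[ℝ] ℝ :=
    (LinearMap.ker Φ).liftQ T ker_le ∘ₗ Φ.quotKerEquivRange.symm.toLinearMap
  have F_apply (y : ⨁ i, D i) : F ⟨Φ y, LinearMap.mem_range_self Φ y⟩ = T y := by
    simp [F]
  obtain ⟨g, hgF, hgN⟩ := exists_extension_of_le_sublinear ⟨_, F⟩ N N_hom N_add
    (by rintro ⟨_, y, rfl⟩; exact (F_apply y).trans_le (T_le y))
  refine ⟨g, hgN, fun i x => ?_⟩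
  have hgx := hgF ⟨Φ (lof ℝ ι _ i x), LinearMap.mem_range_self Φ _⟩
  rw [LinearPMap.mk_apply, F_apply, toModule_lof] at hgx
  simpa [Φ] using hgx

namespace MeasureTheory.SignedMeasure

variable {α : Type*} [MeasurableSpace α]

theorem totalVariation_add_of_mutuallySingular {μ ν : SignedMeasure α}
    (hμν : μ.totalVariation ⟂ₘ ν.totalVariation) :
    (μ + ν).totalVariation = μ.totalVariation + ν.totalVariation := by
  set jμ := μ.toJordanDecomposition
  set jν := ν.toJordanDecomposition
  have pos_ac (s : SignedMeasure α) : s.toJordanDecomposition.posPart ≪ s.totalVariation :=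
    Measure.absolutelyContinuous_of_le (Measure.le_add_right le_rfl)
  have neg_ac (s : SignedMeasure α) : s.toJordanDecomposition.negPart ≪ s.totalVariation :=
    Measure.absolutelyContinuous_of_le (Measure.le_add_left le_rfl)
  -- The Jordan parts of `μ` and `ν` add up to the Jordan decomposition of `μ + ν`.
  let j : JordanDecomposition α :=
    ⟨jμ.posPart + jν.posPart, jμ.negPart + jν.negPart,
      ((jμ.mutuallySingular.add_right (hμν.mono_ac (pos_ac μ) (neg_ac ν))).add_left
        ((hμν.symm.mono_ac (pos_ac ν) (neg_ac μ)).add_right jν.mutuallySingular))⟩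
  have hj : (μ + ν).toJordanDecomposition = j := by
    refine toJordanDecomposition_eq ?_
    simp only [j, JordanDecomposition.toSignedMeasure, Measure.toSignedMeasure_add]
    conv_lhs => rw [← toSignedMeasure_toJordanDecomposition μ,
      ← toSignedMeasure_toJordanDecomposition ν]
    simp only [JordanDecomposition.toSignedMeasure]
    abel
  rw [totalVariation, hj, totalVariation, totalVariation]
  exact add_add_add_comm _ _ _ _

theorem totalVariation_finsetSum_of_pairwise {ι : Type*} (s : Finset ι) (μ : ι → SignedMeasure α)
    (hμ : (s : Set ι).Pairwise fun i j => (μ i).totalVariation ⟂ₘ (μ j).totalVariation) :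
    (∑ i ∈ s, μ i).totalVariation = ∑ i ∈ s, (μ i).totalVariation := by
  classical
  induction s using Finset.induction_on with
  | empty => simp [totalVariation_zero]
  | insert a s ha ih =>
    rw [Finset.coe_insert, Set.pairwise_insert] at hμ
    have ih := ih hμ.1
    have hsing : (μ a).totalVariation ⟂ₘ (∑ i ∈ s, μ i).totalVariation := by
      rw [ih]
      exact Finset.sum_induction _ (fun m => (μ a).totalVariation ⟂ₘ m)
        (fun _ _ => Measure.MutuallySingular.add_right) Measure.MutuallySingular.zero_right
        fun i hi => (hμ.2 i hi (ne_of_mem_of_not_mem hi ha).symm).1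
    rw [Finset.sum_insert ha, Finset.sum_insert ha, totalVariation_add_of_mutuallySingular hsing,
      ih]

theorem totalVariation_real_add_le (μ ν : SignedMeasure α) (s : Set α) :
    (μ + ν).totalVariation.real s ≤ μ.totalVariation.real s + ν.totalVariation.real s := by
  rw [← measureReal_add_apply]
  exact ENNReal.toReal_mono (by finiteness)
    (by simpa only [totalVariation_eq_variation] using VectorMeasure.variation_add_le s)

theorem totalVariation_real_smul (μ : SignedMeasure α) {c : ℝ} (hc : 0 ≤ c) (s : Set α) :
    (c • μ).totalVariation.real s = c * μ.totalVariation.real s := by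
  rw [totalVariation_eq_variation, VectorMeasure.variation_smul, ← totalVariation_eq_variation]
  simp [Measure.real, Real.nnnorm_of_nonneg hc]

end MeasureTheory.SignedMeasure

open SignedMeasure in
theorem stmt_4_general {G : Type*} [MeasurableSpace G]
    {Γ : Type*} (D : Γ → Submodule ℝ (SignedMeasure G))
    (hperp : ∀ γ γ', γ ≠ γ' → ∀ μ ∈ D γ, ∀ ν ∈ D γ',
      μ.totalVariation ⟂ₘ ν.totalVariation)
    (h : ∀ γ, D γ →ₗ[ℝ] ℝ)
    (hb : ∀ γ (μ : D γ),
      |h γ μ| ≤ ((μ : SignedMeasure G).totalVariation Set.univ).toReal) :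
    ∃ H : SignedMeasure G →ₗ[ℝ] ℝ,
      (∀ μ : SignedMeasure G, |H μ| ≤ (μ.totalVariation Set.univ).toReal) ∧
      ∀ γ (μ : D γ), H μ = h γ μ := by
  have norm_sum (s : Finset Γ) (μ : Γ → SignedMeasure G) (hμ : ∀ γ, μ γ ∈ D γ) :
      ∑ γ ∈ s, (μ γ).totalVariation.real Set.univ =
        (∑ γ ∈ s, μ γ).totalVariation.real Set.univ := by
    rw [totalVariation_finsetSum_of_pairwise s μ
      fun γ _ γ' _ hγ => hperp γ γ' hγ _ (hμ γ) _ (hμ γ')]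
    simp [Measure.real, Measure.finsetSum_apply, ENNReal.toReal_sum]
  obtain ⟨H, hH_le, hH_ext⟩ := exists_common_extension_of_le_sublinear D h
    (fun μ => μ.totalVariation.real Set.univ)
    (fun c hc μ => μ.totalVariation_real_smul hc.le _)
    (fun μ ν => μ.totalVariation_real_add_le ν _)
    (fun s μ hμ => (norm_sum s μ hμ).le)
    (fun γ μ => (le_abs_self _).trans (hb γ μ))
  refine ⟨H, fun μ => abs_le.2 ⟨?_, hH_le μ⟩, hH_ext⟩
  have := hH_le (-μ)
  rw [map_neg, totalVariation_neg] at this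
  exact neg_le.1 this

/-- Let `{D γ}` be a family of subspaces of the space `M(G)` of bounded
(signed) Radon measures on a locally compact group `G` such that measures from distinct
subspaces are mutually singular. Given for each `γ` a functional `h γ` in the closed unit
ball of `(D γ)*` (i.e. a linear functional bounded by the total variation norm), there is a
functional `H` in the closed unit ball of `M(G)*` agreeing with `h γ` on `D γ` for all `γ`. -/
theorem stmt_4 {G : Type*} [Group G] [TopologicalSpace G] [IsTopologicalGroup G]
    [LocallyCompactSpace G] [T2Space G] [MeasurableSpace G] [BorelSpace G]
    {Γ : Type*} (D : Γ → Submodule ℝ (SignedMeasure G))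
    (hperp : ∀ γ γ', γ ≠ γ' → ∀ μ ∈ D γ, ∀ ν ∈ D γ',
      μ.totalVariation ⟂ₘ ν.totalVariation)
    (h : ∀ γ, D γ →ₗ[ℝ] ℝ)
    (hb : ∀ γ (μ : D γ),
      |h γ μ| ≤ ((μ : SignedMeasure G).totalVariation Set.univ).toReal) :
    ∃ H : SignedMeasure G →ₗ[ℝ] ℝ,
      (∀ μ : SignedMeasure G, |H μ| ≤ (μ.totalVariation Set.univ).toReal) ∧
      ∀ γ (μ : D γ), H μ = h γ μ :=
  stmt_4_general D hperp h hb
end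

section
/- Let G be a locally compact group and τ an uncountable cardinal. Suppose M₀ is a subspace of M(G) such that for every μ ∈ M₀, |μ| ∈ M₀ and μ is τ-thin. If F ⊆ M₀ is finite, D ⊆ M(G) and |D| < τ, then there exists x ∈ G such that every measure in D is mutually singular to every measure in F ∗ δ_x. -/
/-!
Let `σ = ∑_{ξ ∈ F} |ξ|`; it lies in `M₀`, so it is `τ`-thin, witnessed by `P` with `#P = τ`, and
`|ξ ∗ δₚ| ≤ |σ ∗ δₚ|` for every `ξ ∈ F`. A finite measure can fail to be singular to only countably
many members of a pairwise singular family: the absolutely continuous parts of it with respect to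
the members are pairwise singular and lie below it, so their masses have a finite sum. Hence each
`ν ∈ D` rules out only countably many `p ∈ P`, in total fewer than `τ` of them, and any remaining
`p` works.
-/

open MeasureTheory

universe u

/-- A (signed) measure `μ` on a group `G` is `τ`-thin if there is a set `P ⊆ G` of
cardinality `τ` whose right translates of `μ` are pairwise mutually singular. -/
def IsThinMeasure {G : Type u} [Group G] [MeasurableSpace G]
    (μ : SignedMeasure G) (τ : Cardinal.{u}) : Prop :=
  ∃ P : Set G, Cardinal.mk P = τ ∧
    P.Pairwise fun p p' =>
      SignedMeasure.totalVariation (μ.map (· * p)) ⟂ₘ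
        SignedMeasure.totalVariation (μ.map (· * p'))

namespace MeasureTheory

variable {α β ι : Type*} [MeasurableSpace α] [MeasurableSpace β]

namespace Measure

theorem add_le_of_mutuallySingular {μ ν m : Measure α} (h : μ ⟂ₘ ν) (hμ : μ ≤ m) (hν : ν ≤ m) :
    μ + ν ≤ m := by
  refine Measure.le_iff.2 fun s hs => ?_
  calc (μ + ν) s = μ (s \ h.nullSet) + ν (s ∩ h.nullSet) := by
        rw [add_apply, measure_sdiff_null h.measure_nullSet, ← Set.sdiff_compl,
          measure_sdiff_null h.measure_compl_nullSet]
    _ ≤ m (s \ h.nullSet) + m (s ∩ h.nullSet) := add_le_add (hμ _) (hν _)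
    _ = m s := measure_sdiff_add_inter s h.measurableSet_nullSet

theorem finsetSum_le_of_pairwise_mutuallySingular {m : Measure α} {f : ι → Measure α}
    (T : Finset ι) (hp : (T : Set ι).Pairwise fun i j => f i ⟂ₘ f j) (hle : ∀ i ∈ T, f i ≤ m) :
    ∑ i ∈ T, f i ≤ m := by
  classical
  induction T using Finset.induction_on with
  | empty => simpa using Measure.zero_le m
  | insert a T haT ih =>
    rw [Finset.coe_insert] at hp
    have hsing : f a ⟂ₘ ∑ i ∈ T, f i :=
      Finset.sum_induction _ (f a ⟂ₘ ·) (fun _ _ => MutuallySingular.add_right)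
        MutuallySingular.zero_right fun i hi =>
          hp (Set.mem_insert a _) (Set.mem_insert_of_mem a hi) fun h => haT (h ▸ hi)
    rw [Finset.sum_insert haT]
    exact add_le_of_mutuallySingular hsing (hle a (Finset.mem_insert_self a T))
      (ih (hp.mono (Set.subset_insert a _)) fun i hi => hle i (Finset.mem_insert_of_mem hi))

theorem countable_setOf_ne_zero_of_pairwise_mutuallySingular {m : Measure α} [IsFiniteMeasure m]
    {g : ι → Measure α} (hp : Pairwise fun i j => g i ⟂ₘ g j) (hle : ∀ i, g i ≤ m) :
    {i | g i ≠ 0}.Countable := by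
  have hmass : ∑' i, g i Set.univ ≠ ⊤ := by
    refine ne_top_of_le_ne_top (measure_ne_top m Set.univ)
      (ENNReal.summable.tsum_le_of_sum_le fun T => ?_)
    rw [← finsetSum_apply]
    exact finsetSum_le_of_pairwise_mutuallySingular T (fun i _ j _ hij => hp hij)
      (fun i _ => hle i) Set.univ
  simpa [Function.support, measure_univ_eq_zero] using
    Summable.countable_support_ennreal hmass

theorem countable_setOf_not_mutuallySingular (m : Measure α) [IsFiniteMeasure m]
    {f : ι → Measure α} [∀ i, m.HaveLebesgueDecomposition (f i)]
    (hp : Pairwise fun i j => f i ⟂ₘ f j) :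
    {i | ¬ m ⟂ₘ f i}.Countable := by
  have hp' : Pairwise fun i j => (f i).withDensity (m.rnDeriv (f i)) ⟂ₘ
      (f j).withDensity (m.rnDeriv (f j)) := fun i j hij =>
    (hp hij).mono_ac (withDensity_absolutelyContinuous _ _) (withDensity_absolutelyContinuous _ _)
  simpa only [ne_eq, withDensity_rnDeriv_eq_zero] using
    countable_setOf_ne_zero_of_pairwise_mutuallySingular hp' fun i => withDensity_rnDeriv_le m (f i)

theorem toSignedMeasure_map (μ : Measure α) [IsFiniteMeasure μ] {f : α → β} (hf : Measurable f) :
    μ.toSignedMeasure.map f = (μ.map f).toSignedMeasure := by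
  ext s hs
  rw [VectorMeasure.map_apply _ hf hs, toSignedMeasure_apply_measurable (hf hs),
    toSignedMeasure_apply_measurable hs, map_measureReal_apply hf hs]

theorem toSignedMeasure_finsetSum (T : Finset ι) (μ : ι → Measure α)
    [∀ i, IsFiniteMeasure (μ i)] :
    (∑ i ∈ T, μ i).toSignedMeasure = ∑ i ∈ T, (μ i).toSignedMeasure := by
  ext s hs
  simp [toSignedMeasure_apply_measurable hs, measureReal_def, finsetSum_apply,
    ENNReal.toReal_sum fun i _ => measure_ne_top (μ i) s]

end Measure

theorem SignedMeasure.totalVariation_map_le {ξ : SignedMeasure α} {m : Measure α}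
    [IsFiniteMeasure m] (hξ : ξ.totalVariation ≤ m) (f : α → β) :
    totalVariation (ξ.map f) ≤ totalVariation (m.toSignedMeasure.map f) := by
  by_cases hf : Measurable f
  · rw [m.toSignedMeasure_map hf, totalVariation_eq_variation, totalVariation_eq_variation,
      Measure.variation_toSignedMeasure]
    rw [totalVariation_eq_variation] at hξ
    exact VectorMeasure.variation_map_le.trans (Measure.map_mono hξ hf)
  · simp [VectorMeasure.map_not_measurable _ hf, totalVariation_zero]

end MeasureTheory

open Cardinal in
theorem Cardinal.exists_forall_notMem_of_countable {ι κ : Type u} {B : κ → Set ι}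
    (hB : ∀ k, (B k).Countable) (hκ : #κ < #ι) (hι : ℵ₀ < #ι) : ∃ i, ∀ k, i ∉ B k := by
  have hlt : #(⋃ k, B k) < #ι := by
    refine (mk_iUnion_le B).trans_lt (mul_lt_of_lt hι.le hκ ((ciSup_le' fun k => ?_).trans_lt hι))
    exact mk_le_aleph0_iff.2 (hB k).to_subtype
  obtain ⟨i, hi⟩ : (⋃ k, B k)ᶜ.Nonempty := Set.nonempty_compl.2 fun h => by
    rw [h, mk_univ] at hlt
    exact hlt.false
  exact ⟨i, by simpa using hi⟩

theorem stmt_6_general {G : Type u} [Group G] [MeasurableSpace G]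
    (τ : Cardinal.{u}) (hτ : Cardinal.aleph0 < τ)
    (M₀ : Submodule ℝ (SignedMeasure G))
    (habs : ∀ μ ∈ M₀, ∃ ν ∈ M₀, ∀ s : Set G, MeasurableSet s →
      ν s = (SignedMeasure.totalVariation μ s).toReal)
    (hthin : ∀ μ ∈ M₀, IsThinMeasure μ τ)
    (F : Set (SignedMeasure G)) (hF : F.Finite) (hFM : F ⊆ (M₀ : Set (SignedMeasure G)))
    (D : Set (SignedMeasure G)) (hD : Cardinal.mk D < τ) :
    ∃ x : G, ∀ ν ∈ D, ∀ ξ ∈ F,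
      SignedMeasure.totalVariation ν ⟂ₘ
        SignedMeasure.totalVariation (ξ.map (· * x)) := by
  have htv_mem : ∀ μ ∈ M₀, μ.totalVariation.toSignedMeasure ∈ M₀ := fun μ hμ => by
    obtain ⟨ν, hνM, hν⟩ := habs μ hμ
    convert hνM using 1
    ext s hs
    rw [hν s hs, Measure.toSignedMeasure_apply_measurable hs, measureReal_def]
  set m := ∑ ξ ∈ hF.toFinset, ξ.totalVariation
  have hσM : m.toSignedMeasure ∈ M₀ := by
    rw [Measure.toSignedMeasure_finsetSum]
    exact Submodule.sum_mem _ fun ξ hξ => htv_mem ξ (hFM (hF.mem_toFinset.1 hξ))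
  obtain ⟨P, hPcard, hPpair⟩ := hthin _ hσM
  obtain ⟨p, hp⟩ := Cardinal.exists_forall_notMem_of_countable
    (B := fun ν : D => {p : P | ¬ (ν : SignedMeasure G).totalVariation ⟂ₘ
      SignedMeasure.totalVariation (m.toSignedMeasure.map (· * (p : G)))})
    (fun ν => Measure.countable_setOf_not_mutuallySingular _
      fun p q hpq => hPpair p.2 q.2 (Subtype.val_injective.ne hpq))
    (hPcard ▸ hD) (hPcard ▸ hτ)
  refine ⟨p, fun ν hν ξ hξ => ?_⟩
  have hξm : ξ.totalVariation ≤ m :=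
    Finset.single_le_sum (f := SignedMeasure.totalVariation) (fun _ _ => Measure.zero_le _)
      (hF.mem_toFinset.2 hξ)
  exact (not_not.1 (hp ⟨ν, hν⟩)).mono le_rfl (SignedMeasure.totalVariation_map_le hξm _)

/-- Let `G` be a locally compact group, `τ` an uncountable cardinal, and
`M₀` a subspace of `M(G)` such that every `μ ∈ M₀` has `|μ| ∈ M₀` and is `τ`-thin. If
`F ⊆ M₀` is finite and `D ⊆ M(G)` has cardinality `< τ`, then there is `x ∈ G` such that
every measure in `D` is mutually singular to every measure in `F ∗ δ_x`. -/
theorem stmt_6 {G : Type u} [Group G] [TopologicalSpace G] [IsTopologicalGroup G]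
    [LocallyCompactSpace G] [T2Space G] [MeasurableSpace G] [BorelSpace G]
    (τ : Cardinal.{u}) (hτ : Cardinal.aleph0 < τ)
    (M₀ : Submodule ℝ (SignedMeasure G))
    (habs : ∀ μ ∈ M₀, ∃ ν ∈ M₀, ∀ s : Set G, MeasurableSet s →
      ν s = (SignedMeasure.totalVariation μ s).toReal)
    (hthin : ∀ μ ∈ M₀, IsThinMeasure μ τ)
    (F : Set (SignedMeasure G)) (hF : F.Finite) (hFM : F ⊆ (M₀ : Set (SignedMeasure G)))
    (D : Set (SignedMeasure G)) (hD : Cardinal.mk D < τ) :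
    ∃ x : G, ∀ ν ∈ D, ∀ ξ ∈ F,
      SignedMeasure.totalVariation ν ⟂ₘ
        SignedMeasure.totalVariation (ξ.map (· * x)) :=
  stmt_6_general τ hτ M₀ habs hthin F hF hFM D hD
end

section
/- Let G be a locally compact group and H₀ ⊇ H₁ closed subgroups. Then the local weight (character) of the quotient space G/H₁ satisfies χ(G/H₁) = max(χ(G/H₀), χ(H₀/H₁)). -/
/-!
The quotient map `G/H₁ → G/H₀` is continuous and open, and `H₀/H₁` sits in `G/H₁` as the fibre
over the base point with the subspace topology near it; this gives `≥`. For `≤`, pull a base of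
`G/H₀` back to `G/H₁` and add, for each basic neighbourhood of the base point in `H₀/H₁`, a
neighbourhood in `G/H₁` that cuts it out on the fibre and is the whole space off the fibre. The
resulting family of `χ(G/H₀) + χ(H₀/H₁)` neighbourhoods intersects in the base point, and in a
locally compact Hausdorff space such a family already has a neighbourhood base of its cardinality:
its finite intersections with compact shrinkings, by compactness. Finite characters are handled
separately, since in a T1 space they force the point to be isolated.
-/

open Topology

noncomputable def localWeight (X : Type u) [TopologicalSpace X] (x : X) : Cardinal.{u} :=
  ⨅ B : {S : Set (Set X) // (𝓝 x).HasBasis (· ∈ S) id}, Cardinal.mk B.1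

open Set Filter
open scoped Cardinal

section LocalWeight

variable {X Y : Type u} [TopologicalSpace X] [TopologicalSpace Y] {x : X}

theorem exists_hasBasis_mk_eq_localWeight (x : X) :
    ∃ B : Set (Set X), (𝓝 x).HasBasis (· ∈ B) id ∧ #B = localWeight X x := by
  have : Nonempty {S : Set (Set X) // (𝓝 x).HasBasis (· ∈ S) id} :=
    ⟨⟨{s | s ∈ 𝓝 x}, (𝓝 x).basis_sets⟩⟩
  obtain ⟨⟨B, hB⟩, hmk⟩ := ciInf_mem fun B : {S : Set (Set X) // (𝓝 x).HasBasis (· ∈ S) id} =>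
    #B.1
  exact ⟨B, hB, hmk⟩

theorem localWeight_le_mk_of_hasBasis {ι : Type u} {p : ι → Prop} {s : ι → Set X}
    (h : (𝓝 x).HasBasis p s) : localWeight X x ≤ #{i // p i} :=
  (ciInf_le' _ ⟨_, h.to_image_id⟩).trans Cardinal.mk_image_le

theorem one_le_localWeight (x : X) : 1 ≤ localWeight X x := by
  obtain ⟨B, hB, hmk⟩ := exists_hasBasis_mk_eq_localWeight x
  obtain ⟨U, hU, -⟩ := hB.mem_iff.1 (univ_mem : univ ∈ 𝓝 x)
  rw [← hmk, Cardinal.one_le_iff_ne_zero, Cardinal.mk_ne_zero_iff]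
  exact ⟨⟨U, hU⟩⟩

theorem localWeight_le_one (h : {x} ∈ 𝓝 x) : localWeight X x ≤ 1 := by
  have hpure : 𝓝 x = pure x := le_antisymm (le_pure_iff.2 h) (pure_le_nhds x)
  have hB : (𝓝 x).HasBasis (fun _ : PUnit.{u + 1} => True) fun _ => {x} :=
    hpure ▸ (hasBasis_pure x).comp_surjective (g := fun _ => ()) fun _ => ⟨PUnit.unit, rfl⟩
  simpa using localWeight_le_mk_of_hasBasis hB

theorem localWeight_le_of_map_nhds_eq {f : X → Y} (h : map f (𝓝 x) = 𝓝 (f x)) :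
    localWeight Y (f x) ≤ localWeight X x := by
  obtain ⟨B, hB, hmk⟩ := exists_hasBasis_mk_eq_localWeight x
  exact hmk ▸ localWeight_le_mk_of_hasBasis (h ▸ hB.map f)

theorem localWeight_le_of_nhds_eq_comap {e : X → Y} (h : 𝓝 x = comap e (𝓝 (e x))) :
    localWeight X x ≤ localWeight Y (e x) := by
  obtain ⟨B, hB, hmk⟩ := exists_hasBasis_mk_eq_localWeight (e x)
  exact hmk ▸ localWeight_le_mk_of_hasBasis (h ▸ hB.comap e)

theorem sInter_eq_singleton_of_hasBasis [T1Space X] {B : Set (Set X)}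
    (hB : (𝓝 x).HasBasis (· ∈ B) id) : ⋂₀ B = {x} := by
  rw [sInter_eq_biInter, ← ker_nhds x, hB.ker]
  rfl

theorem localWeight_le_one_of_lt_aleph0 [T1Space X] (h : localWeight X x < ℵ₀) :
    localWeight X x ≤ 1 := by
  obtain ⟨B, hB, hmk⟩ := exists_hasBasis_mk_eq_localWeight x
  rw [← hmk, Cardinal.lt_aleph0_iff_set_finite] at h
  refine localWeight_le_one ?_
  rw [← sInter_eq_singleton_of_hasBasis hB]
  exact (sInter_mem h).2 fun U hU => hB.mem_of_mem hU

theorem localWeight_le_max_of_le_add [T1Space X] {a b : Cardinal.{u}} (ha : 1 ≤ a)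
    (h : localWeight X x ≤ a + b) : localWeight X x ≤ max a b := by
  rcases lt_or_ge (a + b) ℵ₀ with hfin | hinf
  · exact (localWeight_le_one_of_lt_aleph0 (h.trans_lt hfin)).trans (ha.trans (le_max_left a b))
  · rcases Cardinal.aleph0_le_add_iff.1 hinf with ha | hb
    · rwa [← Cardinal.add_eq_max ha]
    · rwa [← Cardinal.add_eq_max' hb]

theorem localWeight_le_mk_of_sInter_eq_singleton [LocallyCompactSpace X] [T2Space X]
    {S : Set (Set X)} (hS : ∀ U ∈ S, U ∈ 𝓝 x) (hne : S.Nonempty) (hSx : ⋂₀ S = {x}) :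
    localWeight X x ≤ #S := by
  rcases S.finite_or_infinite with hfin | hinf
  · refine (localWeight_le_one ?_).trans ?_
    · exact hSx ▸ (sInter_mem hfin).2 hS
    · exact Cardinal.one_le_iff_ne_zero.2 (Cardinal.mk_ne_zero_iff.2 hne.to_subtype)
  have : Infinite S := hinf.to_subtype
  choose D hD hDU hDc using fun U : S => local_compact_nhds (hS U U.2)
  obtain ⟨K, hK, -, hKc⟩ := local_compact_nhds (univ_mem : univ ∈ 𝓝 x)
  set V : Finset S → Set X := fun t => K ∩ ⋂ U ∈ t, D U
  -- The compact sets `V t` decrease to `{x}`, hence eventually enter every neighbourhood.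
  have hV : (𝓝 x).HasBasis (fun _ => True) V := by
    refine ⟨fun W => ⟨fun hW => ?_, fun ⟨t, _, htW⟩ => ?_⟩⟩
    · have hdir : Directed (· ⊇ ·) V := directed_of_isDirected_le fun s t hst =>
        inter_subset_inter_right K (biInter_subset_biInter_left hst)
      refine (exists_subset_nhds_of_isCompact hdir (fun t => ?_) fun y hy => ?_).imp
        fun t ht => ⟨trivial, ht⟩
      · exact hKc.inter_right (isClosed_biInter fun U _ => (hDc U).isClosed)
      · suffices y ∈ ⋂₀ S by rw [hSx, mem_singleton_iff] at this; rwa [this]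
        refine fun U hU => hDU ⟨U, hU⟩ ?_
        simpa [V] using (mem_iInter.1 hy {⟨U, hU⟩}).2
    · exact mem_of_superset (inter_mem hK ((biInter_finset_mem t).2 fun U _ => hD U)) htW
  calc localWeight X x ≤ #{t : Finset S // True} := localWeight_le_mk_of_hasBasis hV
    _ ≤ #(Finset S) := Cardinal.mk_subtype_le _
    _ = #S := Cardinal.mk_finset_of_infinite S

end LocalWeight

section Fiber

variable {X Y Z : Type u} [TopologicalSpace X] [TopologicalSpace Y] [TopologicalSpace Z]

theorem exists_sInter_eq_singleton_of_fiber {f : X → Y} {e : Z → X} {z : Z}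
    (hf : ContinuousAt f (e z)) (he : comap e (𝓝 (e z)) ≤ 𝓝 z)
    (hfib : f ⁻¹' {f (e z)} ⊆ range e) {S₀ : Set (Set Y)} {S₁ : Set (Set Z)}
    (hS₀ : ∀ U ∈ S₀, U ∈ 𝓝 (f (e z))) (hS₀ne : S₀.Nonempty) (hS₀x : ⋂₀ S₀ = {f (e z)})
    (hS₁ : ∀ V ∈ S₁, V ∈ 𝓝 z) (hS₁z : ⋂₀ S₁ = {z}) :
    ∃ S : Set (Set X), (∀ W ∈ S, W ∈ 𝓝 (e z)) ∧ S.Nonempty ∧ ⋂₀ S = {e z} ∧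
      #S ≤ #S₀ + #S₁ := by
  choose T hT hTV using fun V : S₁ => mem_comap.1 (he (hS₁ V V.2))
  set F := f ⁻¹' {f (e z)}
  -- `T V ∪ Fᶜ` is a neighbourhood of `e z` whose trace on the fibre `F` lies in `e '' V`.
  have hS : ∀ W ∈ range (fun U : S₀ => f ⁻¹' U) ∪ range (fun V : S₁ => T V ∪ Fᶜ),
      W ∈ 𝓝 (e z) := by
    rintro W (⟨U, rfl⟩ | ⟨V, rfl⟩)
    · exact hf (hS₀ U U.2)
    · exact mem_of_superset (hT V) subset_union_left
  refine ⟨_, hS, ?_, ?_, ?_⟩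
  · exact (range_nonempty _ (h := hS₀ne.to_subtype)).mono subset_union_left
  · refine subset_antisymm (fun y hy => ?_) fun y hy => hy ▸ fun W hW => mem_of_mem_nhds (hS W hW)
    have hyF : y ∈ F := by
      change f y ∈ ({f (e z)} : Set Y)
      rw [← hS₀x]
      exact fun U hU => hy _ (Or.inl ⟨⟨U, hU⟩, rfl⟩)
    obtain ⟨w, rfl⟩ := hfib hyF
    suffices w ∈ ⋂₀ S₁ by rw [hS₁z] at this; rw [this]; rfl
    exact fun V hV => hTV ⟨V, hV⟩ ((hy _ (Or.inr ⟨⟨V, hV⟩, rfl⟩)).resolve_right (not_not.2 hyF))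
  · exact (Cardinal.mk_union_le _ _).trans
      (add_le_add Cardinal.mk_range_le Cardinal.mk_range_le)

end Fiber

namespace Subgroup

variable {G : Type u} [Group G] {H K : Subgroup G}

variable (H K) in
def quotientSubgroupOfToQuotient : K ⧸ H.subgroupOf K → G ⧸ H :=
  Quotient.map' Subtype.val fun a b h => by
    rw [QuotientGroup.leftRel_apply] at h ⊢
    simpa only [mem_subgroupOf, coe_mul, coe_inv] using h

theorem preimage_quotientMapOfLE_mk_one_subset_range (hle : H ≤ K) :
    quotientMapOfLE hle ⁻¹' {((1 : G) : G ⧸ K)} ⊆ range (quotientSubgroupOfToQuotient H K) := by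
  intro q hq
  obtain ⟨g, rfl⟩ := QuotientGroup.mk_surjective q
  have hgK : g ∈ K := by simpa [QuotientGroup.eq] using hq
  exact ⟨(⟨g, hgK⟩ : K), rfl⟩

theorem quotientSubgroupOfToQuotient_preimage_image_mk_subset (hle : H ≤ K) (W : Set G) :
    quotientSubgroupOfToQuotient H K ⁻¹' ((↑) '' W) ⊆ (↑) '' ((↑) ⁻¹' W : Set K) := by
  intro q ⟨w, hw, hgw⟩
  obtain ⟨g, rfl⟩ := QuotientGroup.mk_surjective q
  have hwg : w⁻¹ * g ∈ H := QuotientGroup.eq.1 hgw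
  have hwK : w ∈ K := by simpa using K.mul_mem g.2 (K.inv_mem (hle hwg))
  exact ⟨⟨w, hwK⟩, hw, QuotientGroup.eq.2 (by simpa [mem_subgroupOf] using hwg)⟩

variable [TopologicalSpace G] [IsTopologicalGroup G]

theorem map_quotientMapOfLE_nhds (hle : H ≤ K) (g : G) :
    Filter.map (quotientMapOfLE hle) (𝓝 (g : G ⧸ H)) = 𝓝 (g : G ⧸ K) := by
  rw [QuotientGroup.nhds_eq, QuotientGroup.nhds_eq, Filter.map_map]
  rfl

theorem nhds_eq_comap_quotientSubgroupOfToQuotient (hle : H ≤ K) (g : K) :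
    𝓝 (g : K ⧸ H.subgroupOf K) =
      Filter.comap (quotientSubgroupOfToQuotient H K) (𝓝 ((g : G) : G ⧸ H)) := by
  rw [QuotientGroup.nhds_eq, QuotientGroup.nhds_eq, nhds_subtype]
  refine le_antisymm (Filter.map_le_iff_le_comap.1 ?_) fun T hT => ?_
  · rw [Filter.map_map]
    exact Filter.map_mono (m := ((↑) : G → G ⧸ H)) Filter.map_comap_le
  · obtain ⟨W, hW, hWT⟩ := Filter.mem_comap.1 hT
    exact Filter.mem_comap.2 ⟨_, image_mem_map hW,
      (quotientSubgroupOfToQuotient_preimage_image_mk_subset hle W).trans (image_subset_iff.2 hWT)⟩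

end Subgroup

theorem stmt_7_general {G : Type u} [Group G] [TopologicalSpace G] [IsTopologicalGroup G]
    [LocallyCompactSpace G]
    (H₀ H₁ : Subgroup G) (h0 : IsClosed (H₀ : Set G)) (h1 : IsClosed (H₁ : Set G))
    (hle : H₁ ≤ H₀) :
    localWeight (G ⧸ H₁) (QuotientGroup.mk 1) =
      max (localWeight (G ⧸ H₀) (QuotientGroup.mk 1))
        (localWeight (H₀ ⧸ H₁.subgroupOf H₀) (QuotientGroup.mk 1)) := by
  -- `h0`, `h1` and this make the quotients T1 (`G ⧸ H₁` even T2) by instance search.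
  have : IsClosed ((H₁.subgroupOf H₀ : Subgroup H₀) : Set H₀) :=
    h1.preimage continuous_subtype_val
  have hf := Subgroup.map_quotientMapOfLE_nhds hle 1
  have he := Subgroup.nhds_eq_comap_quotientSubgroupOfToQuotient hle 1
  refine le_antisymm ?_ (max_le (localWeight_le_of_map_nhds_eq hf)
    (localWeight_le_of_nhds_eq_comap he))
  obtain ⟨B₀, hB₀, hB₀mk⟩ := exists_hasBasis_mk_eq_localWeight (QuotientGroup.mk 1 : G ⧸ H₀)
  obtain ⟨B₁, hB₁, hB₁mk⟩ :=
    exists_hasBasis_mk_eq_localWeight (QuotientGroup.mk 1 : H₀ ⧸ H₁.subgroupOf H₀)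
  obtain ⟨S, hS, hSne, hSx, hSmk⟩ := exists_sInter_eq_singleton_of_fiber
    (e := H₁.quotientSubgroupOfToQuotient H₀) (z := QuotientGroup.mk 1) hf.le he.ge
    (Subgroup.preimage_quotientMapOfLE_mk_one_subset_range hle)
    (fun U => hB₀.mem_of_mem) hB₀.ex_mem (sInter_eq_singleton_of_hasBasis hB₀)
    (fun V => hB₁.mem_of_mem) (sInter_eq_singleton_of_hasBasis hB₁)
  refine localWeight_le_max_of_le_add (one_le_localWeight _) ?_
  rw [← hB₀mk, ← hB₁mk]
  exact (localWeight_le_mk_of_sInter_eq_singleton hS hSne hSx).trans hSmk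

/-- For closed subgroups `H₁ ≤ H₀` of a locally compact group `G`,
`χ(G/H₁) = max (χ(G/H₀), χ(H₀/H₁))`, where `χ` is the character of the quotient space
at the base point. -/
theorem stmt_7 {G : Type u} [Group G] [TopologicalSpace G] [IsTopologicalGroup G]
    [LocallyCompactSpace G] [T2Space G]
    (H₀ H₁ : Subgroup G) (h0 : IsClosed (H₀ : Set G)) (h1 : IsClosed (H₁ : Set G))
    (hle : H₁ ≤ H₀) :
    localWeight (G ⧸ H₁) (QuotientGroup.mk 1) =
      max (localWeight (G ⧸ H₀) (QuotientGroup.mk 1))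
        (localWeight (H₀ ⧸ H₁.subgroupOf H₀) (QuotientGroup.mk 1)) :=
  stmt_7_general H₀ H₁ h0 h1 hle
end

section
/- Let G be a locally compact group and γ > 0 an ordinal. Suppose (K_α)_{α≤γ} is a decreasing family of compact subgroups of G with χ(K_α/K_{α+1}) = ℵ₀ for all α < γ, and K_β = ⋂_{α<β} K_α for all limit ordinals β ≤ γ. Then χ(G/K_γ) = |γ| + χ(G/K₀) + ℵ₀ (cardinal sum, equivalently maximum). -/
/-!
The character `χ(G/K)` at the base point of the quotient by a compact subgroup `K` equals the
character of the filter `𝓝ˢ K` of neighbourhoods of `K` in `G`, and it can only grow as `K`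
shrinks. Transfinite induction then gives `χ(𝓝ˢ K_β) + ℵ₀ = |β| + χ(𝓝ˢ K₀) + ℵ₀` for `β ≤ γ`.

At a successor, a base at `K_{α+1}` is formed by intersecting a base at `K_α` with compact
neighbourhoods `M` of `K_{α+1}` whose traces on `K_α` form a base of `𝓝ˢ K_{α+1}` within `K_α`:
given an open `W ⊇ K_{α+1}` and such an `M` with trace inside `W`, the compact set `M \ W`
misses `K_α`, so a basic neighbourhood of `K_α` avoids it. Thus `χ` grows by a factor of at most
`χ(K_α / K_{α+1}) = ℵ₀`. At a limit `β`, compactness puts some `K_α`, `α < β`, inside every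
neighbourhood of `K_β`. Hence the union of bases at the `K_α` is a base at `K_β`; conversely, for
any base at `K_β` the indices `α` with `K_α` inside a member of the base are cofinal in `β`,
because the chain decreases strictly (`χ(K_α / K_{α+1}) ≠ 1`).
-/

open Topology

open Filter Set Pointwise Cardinal

universe u

namespace Filter

variable {X Y : Type u}

noncomputable def character (f : Filter X) : Cardinal.{u} :=
  ⨅ B : {S : Set (Set X) // f.HasBasis (· ∈ S) id}, #B.1

theorem HasBasis.character_le {f : Filter X} {ι : Type u} {s : ι → Set X}
    (h : f.HasBasis (fun _ => True) s) : f.character ≤ #ι := by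
  have hS : f.HasBasis (· ∈ range s) id := ⟨fun t => by simp [h.mem_iff]⟩
  calc f.character ≤ #(range s) :=
        ciInf_le' (fun B : {S : Set (Set X) // f.HasBasis (· ∈ S) id} => #B.1) ⟨_, hS⟩
    _ ≤ #ι := mk_range_le

theorem exists_hasBasis_mk_eq_character (f : Filter X) :
    ∃ (ι : Type u) (s : ι → Set X), f.HasBasis (fun _ => True) s ∧ #ι = f.character := by
  have : Nonempty {S : Set (Set X) // f.HasBasis (· ∈ S) id} := ⟨⟨f.sets, f.basis_sets⟩⟩
  obtain ⟨⟨S, hS⟩, hcard⟩ := ciInf_mem fun B : {S : Set (Set X) // f.HasBasis (· ∈ S) id} => #B.1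
  exact ⟨S, Subtype.val, ⟨fun t => by simp [hS.mem_iff]⟩, hcard⟩

theorem character_map_le (q : X → Y) (f : Filter X) : (map q f).character ≤ f.character := by
  obtain ⟨ι, s, hs, hcard⟩ := f.exists_hasBasis_mk_eq_character
  exact hcard ▸ (hs.map q).character_le

theorem character_comap_le (q : Y → X) (f : Filter X) : (comap q f).character ≤ f.character := by
  obtain ⟨ι, s, hs, hcard⟩ := f.exists_hasBasis_mk_eq_character
  exact hcard ▸ (hs.comap q).character_le

theorem character_iInf_le {ι : Type u} [Nonempty ι] {F : ι → Filter X}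
    (hF : Directed (· ≥ ·) F) : (⨅ i, F i).character ≤ #ι * ⨆ i, (F i).character := by
  choose κ s hs hcard using fun i => (F i).exists_hasBasis_mk_eq_character
  calc (⨅ i, F i).character ≤ #(Σ i, κ i) :=
        (hasBasis_iInf_of_directed' s (fun _ _ => True) hs hF).character_le
    _ = sum fun i => (F i).character := by simp only [mk_sigma, hcard]
    _ ≤ #ι * ⨆ i, (F i).character := sum_le_mk_mul_iSup _

end Filter

theorem localWeight_eq_character (X : Type u) [TopologicalSpace X] (x : X) :
    localWeight X x = (𝓝 x).character :=
  rfl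

section NhdsSet

variable {X : Type u} [TopologicalSpace X]

theorem nhdsSet_iInter_eq_iInf_of_directed {ι : Type*} [Nonempty ι] {V : ι → Set X}
    (hV : Directed (· ⊇ ·) V) (hVc : ∀ i, IsCompact (V i)) (hVcl : ∀ i, IsClosed (V i)) :
    𝓝ˢ (⋂ i, V i) = ⨅ i, 𝓝ˢ (V i) := by
  refine le_antisymm (nhdsSet_iInter_le V) fun U hU => ?_
  obtain ⟨i, hi⟩ := exists_subset_nhds_of_isCompact' hV hVc hVcl (U := interior U)
    fun x hx => isOpen_interior.mem_nhds (subset_interior_iff_mem_nhdsSet.2 hU hx)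
  exact mem_iInf_of_mem i (subset_interior_iff_mem_nhdsSet.1 hi)

theorem character_comap_coe_nhdsSet_le_one {N L : Set X} (hLN : L ⊆ N) :
    (comap ((↑) : L → X) (𝓝ˢ N)).character ≤ 1 := by
  have : (comap ((↑) : L → X) (𝓝ˢ N)).HasBasis (fun _ : PUnit => True) fun _ => univ := by
    refine ⟨fun t => ⟨fun ht => ⟨⟨⟩, trivial, fun x _ => ?_⟩, fun ⟨_, _, ht⟩ => ?_⟩⟩
    · obtain ⟨W, hW, hWt⟩ := mem_comap.1 ht
      exact hWt (subset_of_mem_nhdsSet hW (hLN x.2))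
    · exact mem_of_superset univ_mem ht
  exact this.character_le.trans_eq mk_punit

theorem character_nhdsSet_le_mul [LocallyCompactSpace X] [T2Space X] {N L : Set X}
    (hN : IsCompact N) (hNL : N ⊆ L) :
    (𝓝ˢ N).character ≤ (𝓝ˢ L).character * (comap ((↑) : L → X) (𝓝ˢ N)).character := by
  obtain ⟨ι, U, hU, hι⟩ := (𝓝ˢ L).exists_hasBasis_mk_eq_character
  obtain ⟨κ, V, hV, hκ⟩ := (comap ((↑) : L → X) (𝓝ˢ N)).exists_hasBasis_mk_eq_character
  have hM : ∀ k, ∃ M, IsCompact M ∧ N ⊆ interior M ∧ M ∩ L ⊆ (↑) '' V k := by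
    intro k
    obtain ⟨W, hW, hWV⟩ := mem_comap.1 (hV.mem_of_mem trivial)
    obtain ⟨O, hO, hNO, hOW⟩ := mem_nhdsSet_iff_exists.1 hW
    obtain ⟨M, hMc, hNM, hMO⟩ := exists_compact_between hN hO hNO
    exact ⟨M, hMc, hNM, fun x hx => ⟨⟨x, hx.2⟩, hWV (hOW (hMO hx.1)), rfl⟩⟩
  choose M hMc hNM hML using hM
  have hbasis : (𝓝ˢ N).HasBasis (fun _ : ι × κ => True) fun p => U p.1 ∩ interior (M p.2) := by
    refine ⟨fun t => ⟨fun ht => ?_, fun ⟨p, _, hpt⟩ => ?_⟩⟩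
    · obtain ⟨W, hWo, hNW, hWt⟩ := mem_nhdsSet_iff_exists.1 ht
      obtain ⟨k, -, hk⟩ := hV.mem_iff.1 (preimage_mem_comap (hWo.mem_nhdsSet.2 hNW))
      have hDL : Disjoint (M k \ W) L := by
        rw [disjoint_left]
        rintro x ⟨hxM, hxW⟩ hxL
        obtain ⟨y, hy, rfl⟩ := hML k ⟨hxM, hxL⟩
        exact hxW (hk hy)
      obtain ⟨i, -, hi⟩ := hU.mem_iff.1
        (((hMc k).diff hWo).isClosed.isOpen_compl.mem_nhdsSet.2 hDL.subset_compl_left)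
      exact ⟨(i, k), trivial, fun x hx =>
        hWt (by_contra fun hxW => hi hx.1 ⟨interior_subset hx.2, hxW⟩)⟩
    · exact mem_of_superset (inter_mem (nhdsSet_mono hNL (hU.mem_of_mem trivial))
        (isOpen_interior.mem_nhdsSet.2 (hNM p.2))) hpt
  calc (𝓝ˢ N).character ≤ #(ι × κ) := hbasis.character_le
    _ = _ := by rw [mk_prod, lift_id, lift_id, hι, hκ]

end NhdsSet

section CompactSubgroup

variable {G : Type u} [Group G] [TopologicalSpace G] [IsTopologicalGroup G]

theorem QuotientGroup.map_mk_nhdsSet {N : Subgroup G} {s : Set G} (hs : s.Nonempty)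
    (hsN : s ⊆ N) : Filter.map ((↑) : G → G ⧸ N) (𝓝ˢ s) = 𝓝 ((1 : G) : G ⧸ N) := by
  rw [QuotientGroup.isOpenMap_coe.map_nhdsSet_eq QuotientGroup.continuous_mk,
    ← nhdsSet_singleton]
  congr 1
  refine (hs.image _).subset_singleton_iff.1 ?_
  rintro _ ⟨x, hx, rfl⟩
  exact QuotientGroup.eq.2 (by simpa using hsN hx)

theorem QuotientGroup.comap_mk_nhds_one {N : Subgroup G} (hN : IsCompact (N : Set G)) :
    comap ((↑) : G → G ⧸ N) (𝓝 ((1 : G) : G ⧸ N)) = 𝓝ˢ (N : Set G) := by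
  refine le_antisymm (fun t ht => ?_) ?_
  · obtain ⟨U, hUo, hNU, hUt⟩ := mem_nhdsSet_iff_exists.1 ht
    obtain ⟨P, hP, hPN⟩ := compact_open_separated_mul_left hN hUo hNU
    have h1 : (1 : G) ∈ interior P * (N : Set G) :=
      ⟨1, mem_interior_iff_mem_nhds.2 hP, 1, N.one_mem, one_mul 1⟩
    refine ⟨(↑) '' (interior P * (N : Set G)),
      (QuotientGroup.isOpenMap_coe _ isOpen_interior.mul_right).mem_nhds ⟨1, h1, rfl⟩, ?_⟩
    rw [QuotientGroup.preimage_image_mk_eq_mul, mul_assoc, coe_mul_coe]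
    exact (mul_subset_mul_right interior_subset).trans (hPN.trans hUt)
  · rw [← QuotientGroup.map_mk_nhdsSet ⟨1, N.one_mem⟩ subset_rfl]
    exact le_comap_map

theorem localWeight_quotient_eq_character {N : Subgroup G} (hN : IsCompact (N : Set G)) :
    localWeight (G ⧸ N) ((1 : G) : G ⧸ N) = (𝓝ˢ (N : Set G)).character := by
  refine le_antisymm ?_ ?_
  · rw [localWeight_eq_character, ← QuotientGroup.map_mk_nhdsSet ⟨1, N.one_mem⟩ subset_rfl]
    exact character_map_le _ _
  · rw [← QuotientGroup.comap_mk_nhds_one hN]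
    exact character_comap_le _ _

theorem character_nhdsSet_le_of_le {A B : Subgroup G} (hB : IsCompact (B : Set G))
    (hAB : A ≤ B) : (𝓝ˢ (B : Set G)).character ≤ (𝓝ˢ (A : Set G)).character := by
  rw [← localWeight_quotient_eq_character hB, localWeight_eq_character,
    ← QuotientGroup.map_mk_nhdsSet ⟨1, A.one_mem⟩ hAB]
  exact character_map_le _ _

theorem character_nhdsSet_add_aleph0_eq_of_le [LocallyCompactSpace G] [T2Space G]
    {N L : Subgroup G} (hN : IsCompact (N : Set G)) (hL : IsCompact (L : Set G)) (hNL : N ≤ L)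
    (hrel : (comap ((↑) : L → G) (𝓝ˢ (N : Set G))).character ≤ ℵ₀) :
    (𝓝ˢ (N : Set G)).character + ℵ₀ = (𝓝ˢ (L : Set G)).character + ℵ₀ := by
  rw [add_eq_max' le_rfl, add_eq_max' le_rfl]
  refine le_antisymm (max_le ?_ (le_max_right _ _))
    (max_le_max_right _ (character_nhdsSet_le_of_le hL hNL))
  calc (𝓝ˢ (N : Set G)).character ≤ (𝓝ˢ (L : Set G)).character * ℵ₀ :=
        (character_nhdsSet_le_mul hN hNL).trans (by gcongr; exact hrel)
    _ ≤ max (max (𝓝ˢ (L : Set G)).character ℵ₀) ℵ₀ := mul_le_max _ _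
    _ = max (𝓝ˢ (L : Set G)).character ℵ₀ := by rw [max_assoc, max_self]

theorem localWeight_quotient_subgroupOf_eq {N L : Subgroup G} (hN : IsCompact (N : Set G))
    (hNL : N ≤ L) :
    localWeight (L ⧸ N.subgroupOf L) ((1 : L) : L ⧸ N.subgroupOf L) =
      (comap ((↑) : L → G) (𝓝ˢ (N : Set G))).character := by
  have himage : ((↑) : L → G) '' (N.subgroupOf L : Set L) = N := by
    ext x
    simpa [Subgroup.mem_subgroupOf] using fun hx : x ∈ N => hNL hx
  rw [localWeight_quotient_eq_character (by rwa [Subtype.isCompact_iff, himage]),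
    IsInducing.subtypeVal.nhdsSet_eq_comap]
  exact congrArg (fun s => (comap ((↑) : L → G) (𝓝ˢ s)).character) himage

end CompactSubgroup

theorem Ordinal.card_le_mk_mul_iSup_card_of_cofinal {ι : Type u} (a : ι → Ordinal.{u})
    {b : Ordinal.{u}} (h : ∀ α < b, ∃ i, α < a i) : b.card ≤ #ι * ⨆ i, (a i).card := by
  have hb : b ≤ ⨆ i, a i := not_lt.1 fun hlt =>
    let ⟨i, hi⟩ := h _ hlt
    (hi.trans_le (Ordinal.le_iSup a i)).false
  exact (Ordinal.card_le_card hb).trans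
    ((Ordinal.card_iSup_le_sum_card a).trans (sum_le_mk_mul_iSup _))

theorem antitoneOn_Iic_of_succ_of_isSuccLimit {α : Type*} [CompleteLattice α]
    {f : Ordinal → α} {γ : Ordinal} (hsucc : ∀ a < γ, f (a + 1) ≤ f a)
    (hlim : ∀ b ≤ γ, Order.IsSuccLimit b → f b = ⨅ a < b, f a) : AntitoneOn f (Iic γ) := by
  suffices ∀ b ≤ γ, ∀ a ≤ b, f b ≤ f a from fun a _ b hb hab => this b hb a hab
  intro b
  induction b using Ordinal.limitRecOn with
  | zero => intro _ a ha; rw [nonpos_iff_eq_zero.1 ha]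
  | add_one c ih =>
    intro hc a ha
    rcases ha.lt_or_eq with ha | rfl
    · have hcγ : c < γ := Order.add_one_le_iff.1 hc
      exact (hsucc c hcγ).trans (ih hcγ.le a (Order.lt_add_one_iff.1 ha))
    · exact le_rfl
  | limit b hb _ =>
    intro hbγ a ha
    rcases ha.lt_or_eq with ha | rfl
    · rw [hlim b hbγ hb]
      exact biInf_le _ ha
    · exact le_rfl

section DecreasingChain

variable {G : Type u} [Group G] {K : Ordinal.{u} → Subgroup G} {b : Ordinal.{u}}

theorem antitone_coe_Iio (hanti : AntitoneOn K (Iic b)) :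
    Antitone fun a : Iio b => (K a : Set G) :=
  fun a a' h => hanti (Iio_subset_Iic_self a.2) (Iio_subset_Iic_self a'.2) h

variable [TopologicalSpace G] [T2Space G]

theorem nhdsSet_eq_iInf_of_isSuccLimit (hcomp : ∀ a ≤ b, IsCompact (K a : Set G))
    (hanti : AntitoneOn K (Iic b)) (hb : Order.IsSuccLimit b) (hKb : K b = ⨅ a < b, K a) :
    𝓝ˢ (K b : Set G) = ⨅ a : Iio b, 𝓝ˢ (K a : Set G) := by
  have : Nonempty (Iio b) := ⟨⟨0, hb.bot_lt⟩⟩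
  have hKb' : (K b : Set G) = ⋂ a : Iio b, (K a : Set G) := by
    ext x
    simp [hKb]
  rw [hKb']
  exact nhdsSet_iInter_eq_iInf_of_directed (antitone_coe_Iio hanti).directed_ge
    (fun a => hcomp a a.2.le) fun a => (hcomp a a.2.le).isClosed

theorem character_nhdsSet_le_card_mul_of_isSuccLimit (hcomp : ∀ a ≤ b, IsCompact (K a : Set G))
    (hanti : AntitoneOn K (Iic b)) (hb : Order.IsSuccLimit b) (hKb : K b = ⨅ a < b, K a)
    {c : Cardinal.{u}} (hc : ∀ a < b, (𝓝ˢ (K a : Set G)).character ≤ c) :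
    (𝓝ˢ (K b : Set G)).character ≤ b.card * c := by
  have : Nonempty b.ToType := ⟨Ordinal.ToType.mk ⟨0, hb.bot_lt⟩⟩
  let e : b.ToType ≃ Iio b := Ordinal.ToType.mk.symm.toEquiv
  have hdir : Directed (· ≥ ·) fun i => 𝓝ˢ (K (e i) : Set G) :=
    (monotone_nhdsSet.comp_antitone ((antitone_coe_Iio hanti).comp_monotone
      Ordinal.ToType.mk.symm.monotone)).directed_ge
  rw [nhdsSet_eq_iInf_of_isSuccLimit hcomp hanti hb hKb, ← e.iInf_comp]
  refine (character_iInf_le hdir).trans ?_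
  rw [mk_toType]
  gcongr
  exact ciSup_le' fun i => hc _ (e i).2

theorem card_le_character_nhdsSet_mul_of_isSuccLimit (hcomp : ∀ a ≤ b, IsCompact (K a : Set G))
    (hanti : AntitoneOn K (Iic b)) (hb : Order.IsSuccLimit b) (hKb : K b = ⨅ a < b, K a)
    (hstrict : ∀ a < b, ¬K a ≤ K (a + 1)) {c : Cardinal.{u}} (hc : ∀ a < b, a.card ≤ c) :
    b.card ≤ (𝓝ˢ (K b : Set G)).character * c := by
  obtain ⟨ι, U, hU, hι⟩ := (𝓝ˢ (K b : Set G)).exists_hasBasis_mk_eq_character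
  have : Nonempty (Iio b) := ⟨⟨0, hb.bot_lt⟩⟩
  have hdir : Directed (· ≥ ·) fun a : Iio b => 𝓝ˢ (K a : Set G) :=
    (monotone_nhdsSet.comp_antitone (antitone_coe_Iio hanti)).directed_ge
  have hUK : ∀ i, ∃ a : Iio b, (K a : Set G) ⊆ U i := fun i => by
    have hUi := hU.mem_of_mem (i := i) trivial
    rw [nhdsSet_eq_iInf_of_isSuccLimit hcomp hanti hb hKb, mem_iInf_of_directed hdir] at hUi
    exact hUi.imp fun a => subset_of_mem_nhdsSet
  choose a haU using hUK
  -- A point of `K α \ K (α + 1)` is avoided by some `U i`, which forces `α < a i`.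
  have hcofinal : ∀ α < b, ∃ i, α < a i := by
    intro α hα
    obtain ⟨x, hxα, hxα1⟩ := SetLike.not_le_iff_exists.1 (hstrict α hα)
    have hα1 : α + 1 ≤ b := Order.add_one_le_of_lt hα
    have hxb : x ∉ K b := fun hx => hxα1 (hanti hα1 self_mem_Iic hα1 hx)
    obtain ⟨i, -, hi⟩ := hU.mem_iff.1 (isOpen_compl_singleton.mem_nhdsSet.2
      fun y hy (hyx : y = x) => hxb (hyx ▸ hy))
    refine ⟨i, not_le.1 fun hai => hi (haU i ?_) rfl⟩
    exact hanti (Iio_subset_Iic_self (a i).2) hα.le hai hxα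
  refine (Ordinal.card_le_mk_mul_iSup_card_of_cofinal (fun i => (a i : Ordinal)) hcofinal).trans
    ?_
  rw [hι]
  gcongr
  exact ciSup_le' fun i => hc _ (a i).2

variable [IsTopologicalGroup G]

theorem character_nhdsSet_add_aleph0_of_isSuccLimit (hcomp : ∀ a ≤ b, IsCompact (K a : Set G))
    (hanti : AntitoneOn K (Iic b)) (hb : Order.IsSuccLimit b) (hKb : K b = ⨅ a < b, K a)
    (hstrict : ∀ a < b, ¬K a ≤ K (a + 1)) {t : Cardinal.{u}}
    (ht : t ≤ (𝓝ˢ (K b : Set G)).character)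
    (ih : ∀ a < b, (𝓝ˢ (K a : Set G)).character + ℵ₀ = a.card + t + ℵ₀) :
    (𝓝ˢ (K b : Set G)).character + ℵ₀ = b.card + t + ℵ₀ := by
  set c := (𝓝ˢ (K b : Set G)).character
  have hcℵ : ℵ₀ ≤ c + ℵ₀ := le_add_self
  have hsℵ : ℵ₀ ≤ b.card + t + ℵ₀ := le_add_self
  refine le_antisymm ?_ ?_
  · have hc : c ≤ b.card * (b.card + t + ℵ₀) :=
      character_nhdsSet_le_card_mul_of_isSuccLimit hcomp hanti hb hKb fun a ha =>
        le_self_add.trans ((ih a ha).trans_le (by gcongr))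
    calc c + ℵ₀ ≤ (b.card + t + ℵ₀) * (b.card + t + ℵ₀) + ℵ₀ := by
          gcongr
          exact hc.trans (by gcongr; exact le_self_add.trans le_self_add)
      _ = b.card + t + ℵ₀ := by rw [mul_eq_self hsℵ, Cardinal.add_eq_left hsℵ hsℵ]
  · have hcard : b.card ≤ c * (c + ℵ₀) :=
      card_le_character_nhdsSet_mul_of_isSuccLimit hcomp hanti hb hKb hstrict fun a ha =>
        (le_self_add.trans le_self_add).trans <| (ih a ha).symm.trans_le <| by
          gcongr
          exact character_nhdsSet_le_of_le (hcomp a ha.le) (hanti ha.le self_mem_Iic ha.le)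
    calc b.card + t + ℵ₀ ≤ (c + ℵ₀) * (c + ℵ₀) + (c + ℵ₀) + (c + ℵ₀) := by
          gcongr
          · exact hcard.trans (by gcongr; exact le_self_add)
          · exact ht.trans le_self_add
      _ = c + ℵ₀ := by rw [mul_eq_self hcℵ, add_eq_self hcℵ, add_eq_self hcℵ]

theorem character_nhdsSet_add_aleph0_eq [LocallyCompactSpace G] {γ : Ordinal.{u}}
    (hcomp : ∀ a ≤ γ, IsCompact (K a : Set G)) (hanti : AntitoneOn K (Iic γ))
    (hlim : ∀ b ≤ γ, Order.IsSuccLimit b → K b = ⨅ a < b, K a)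
    (hrel : ∀ a < γ, (comap ((↑) : K a → G) (𝓝ˢ (K (a + 1) : Set G))).character ≤ ℵ₀)
    (hstrict : ∀ a < γ, ¬K a ≤ K (a + 1)) :
    ∀ b ≤ γ, (𝓝ˢ (K b : Set G)).character + ℵ₀ =
      b.card + (𝓝ˢ (K 0 : Set G)).character + ℵ₀ := by
  intro b
  induction b using Ordinal.limitRecOn with
  | zero => intro _; rw [Ordinal.card_zero, zero_add]
  | add_one c ih =>
    intro hc
    have hcγ : c < γ := Order.add_one_le_iff.1 hc
    rw [character_nhdsSet_add_aleph0_eq_of_le (hcomp _ hc) (hcomp c hcγ.le)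
      (hanti hcγ.le hc le_self_add) (hrel c hcγ), ih hcγ.le, Ordinal.card_add_one,
      add_right_comm _ 1, add_assoc _ 1, add_comm 1, add_one_of_aleph0_le le_rfl]
  | limit b hb ih =>
    intro hbγ
    exact character_nhdsSet_add_aleph0_of_isSuccLimit (fun a ha => hcomp a (ha.trans hbγ))
      (hanti.mono (Iic_subset_Iic.2 hbγ)) hb (hlim b hbγ hb)
      (fun a ha => hstrict a (ha.trans_le hbγ))
      (character_nhdsSet_le_of_le (hcomp 0 zero_le)
        (hanti (zero_le : (0 : Ordinal) ≤ γ) hbγ zero_le))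
      fun a ha => ih a ha (ha.le.trans hbγ)

end DecreasingChain

/-- Let `γ > 0` be an ordinal and `(K α)_{α ≤ γ}` a decreasing family of
compact subgroups of a locally compact group `G` with `χ(K α / K (α+1)) = ℵ₀` for `α < γ`
and `K β = ⋂_{α < β} K α` at limit ordinals `β ≤ γ`. Then
`χ(G / K γ) = |γ| + χ(G / K 0) + ℵ₀` (cardinal sum). -/
theorem stmt_10 {G : Type u} [Group G] [TopologicalSpace G] [IsTopologicalGroup G]
    [LocallyCompactSpace G] [T2Space G]
    (γ : Ordinal.{u}) (hγ : 0 < γ) (K : Ordinal.{u} → Subgroup G)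
    (hcomp : ∀ α ≤ γ, IsCompact (K α : Set G))
    (hmono : ∀ α < γ, K (α + 1) ≤ K α)
    (hchi : ∀ α < γ,
      localWeight (↥(K α) ⧸ (K (α + 1)).subgroupOf (K α)) (QuotientGroup.mk 1) =
        Cardinal.aleph0)
    (hlim : ∀ β ≤ γ, Order.IsSuccLimit β → K β = ⨅ (α : Ordinal) (_ : α < β), K α) :
    localWeight (G ⧸ K γ) (QuotientGroup.mk 1) =
      γ.card + localWeight (G ⧸ K 0) (QuotientGroup.mk 1) + Cardinal.aleph0 := by
  have hanti : AntitoneOn K (Iic γ) := antitoneOn_Iic_of_succ_of_isSuccLimit hmono hlim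
  have hrel (α) (hα : α < γ) :
      (comap ((↑) : K α → G) (𝓝ˢ (K (α + 1) : Set G))).character = ℵ₀ :=
    (localWeight_quotient_subgroupOf_eq (hcomp _ (Order.add_one_le_of_lt hα))
      (hmono α hα)).symm.trans (hchi α hα)
  have hstrict (α) (hα : α < γ) : ¬K α ≤ K (α + 1) := fun hle =>
    (character_comap_coe_nhdsSet_le_one hle).not_gt ((hrel α hα).symm ▸ one_lt_aleph0)
  have hγ1 : 1 ≤ γ := Order.one_le_iff_pos.2 hγ
  have hℵ : ℵ₀ ≤ (𝓝ˢ (K γ : Set G)).character := by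
    calc ℵ₀ = (comap ((↑) : K 0 → G) (𝓝ˢ (K 1 : Set G))).character := by
          rw [← hrel 0 hγ, zero_add]
      _ ≤ (𝓝ˢ (K 1 : Set G)).character := character_comap_le _ _
      _ ≤ (𝓝ˢ (K γ : Set G)).character :=
          character_nhdsSet_le_of_le (hcomp 1 hγ1) (hanti hγ1 self_mem_Iic hγ1)
  rw [localWeight_quotient_eq_character (hcomp γ le_rfl),
    localWeight_quotient_eq_character (hcomp 0 hγ.le),
    ← character_nhdsSet_add_aleph0_eq hcomp hanti hlim (fun α hα => (hrel α hα).le) hstrict γ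
      le_rfl, Cardinal.add_eq_left hℵ hℵ]
end

section
/- Let G be a σ-compact locally compact group and ν, ν' nonnegative bounded Radon measures on G with ν ⊥ ν'. Then for any neighbourhood V of the identity there exist a K_σ set E ⊆ G and a compact normal subgroup N ⊆ V of G with χ(G/N) ≤ ℵ₀ such that ν(E) = ν(G) and ν'(E·N) = 0; in particular ν ∗ λ_N ⊥ ν' ∗ λ_N, where λ_N is the normalized Haar measure of N. -/
open MeasureTheory Topology Pointwise

/-!
Inner regularity puts `ν` on a σ-compact set `E = ⋃ Kₖ` that is `ν'`-null, and outer regularity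
gives, for every `k` and `n`, a neighbourhood `W` of `1` with `ν'(Kₖ W) < 1/n`. The
Kakutani–Kodaira construction then yields a compact normal subgroup `N` inside `V` and inside all
these countably many `W`, so `ν'(E N) = 0`: `N = ⋂ Uₙ` for closed symmetric neighbourhoods of `1`
with `Uₙ₊₁² ⊆ Uₙ` and `g Uₙ₊₁ g⁻¹ ⊆ Uₙ` for `g` in the `n`-th compact piece of `G`. The `Uₙ`
form a basis of neighbourhoods of `N`, which makes `G ⧸ N` first countable at the identity.
Finally `ν ∗ λ_N` lives on `E N` while `ν' ∗ λ_N` lives off it, since `(G \ E N) N = G \ E N`.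
-/

open Filter Set
open scoped ENNReal

theorem localWeight_le_aleph0 {X : Type u} [TopologicalSpace X] (x : X)
    [(𝓝 x).IsCountablyGenerated] : localWeight X x ≤ Cardinal.aleph0 := by
  obtain ⟨s, hs⟩ := (𝓝 x).exists_antitone_basis
  have hcount : (s '' {_n | True}).Countable := (to_countable _).image s
  exact (ciInf_le' _ ⟨_, hs.toHasBasis.to_image_id⟩).trans hcount.le_aleph0

theorem hasAntitoneBasis_nhdsSet_iInter {X : Type*} [TopologicalSpace X] {U : ℕ → Set X}
    (hU : Antitone U) (hcpt : ∀ n, IsCompact (U n)) (hcl : ∀ n, IsClosed (U n))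
    (hnhds : ∀ n, U n ∈ 𝓝ˢ (⋂ m, U m)) : (𝓝ˢ (⋂ n, U n)).HasAntitoneBasis U where
  toHasBasis := ⟨fun t => ⟨fun ht => by
      simpa using exists_subset_nhds_of_isCompact' hU.directed_ge hcpt hcl
        (mem_nhdsSet_iff_forall.1 ht),
    fun ⟨n, _, hn⟩ => mem_of_superset (hnhds n) hn⟩⟩
  antitone := hU

theorem QuotientGroup.nhds_mk_one_eq_map_nhdsSet {G : Type*} [Group G] [TopologicalSpace G]
    [IsTopologicalGroup G] (N : Subgroup G) :
    𝓝 ((1 : G) : G ⧸ N) = Filter.map ((↑) : G → G ⧸ N) (𝓝ˢ (N : Set G)) := by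
  refine le_antisymm ((QuotientGroup.isOpenMap_coe.nhds_le 1).trans
    (Filter.map_mono (nhds_le_nhdsSet N.one_mem))) ?_
  refine map_le_iff_le_comap.2 (nhdsSet_le.2 fun x hx => ?_)
  have hx1 : ((x : G) : G ⧸ N) = ((1 : G) : G ⧸ N) := by
    rw [QuotientGroup.eq, mul_one]; exact N.inv_mem hx
  exact hx1 ▸ (QuotientGroup.continuous_mk.tendsto x).le_comap

theorem QuotientGroup.isCountablyGenerated_nhds_mk_one {G : Type*} [Group G]
    [TopologicalSpace G] [IsTopologicalGroup G] (N : Subgroup G)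
    [(𝓝ˢ (N : Set G)).IsCountablyGenerated] :
    (𝓝 ((1 : G) : G ⧸ N)).IsCountablyGenerated := by
  rw [nhds_mk_one_eq_map_nhdsSet]
  infer_instance

section KakutaniKodaira

variable {G : Type*} [Group G] [TopologicalSpace G]

theorem IsCompact.exists_nhds_one_conj_subset [IsTopologicalGroup G] {K A : Set G}
    (hK : IsCompact K) (hA : A ∈ 𝓝 (1 : G)) :
    ∃ D ∈ 𝓝 (1 : G), ∀ g ∈ K, ∀ x ∈ D, g * x * g⁻¹ ∈ A := by
  have hopen : IsOpen ((fun p : G × G => p.1 * p.2 * p.1⁻¹) ⁻¹' interior A) :=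
    isOpen_interior.preimage (by fun_prop)
  obtain ⟨u, D, -, hDo, hKu, hD1, hKD⟩ :=
    generalized_tube_lemma hK (isCompact_singleton (x := (1 : G))) hopen
      fun p ⟨_, hp⟩ => by simp [mem_singleton_iff.1 hp, mem_interior_iff_mem_nhds, hA]
  exact ⟨D, hDo.mem_nhds (hD1 rfl), fun g hg x hx =>
    interior_subset (hKD (mk_mem_prod (hKu hg) hx))⟩

theorem IsCompact.exists_closed_nhds_one_inv_eq_mul_subset_conj [IsTopologicalGroup G]
    {K A : Set G} (hK : IsCompact K) (hA : A ∈ 𝓝 (1 : G)) :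
    ∃ U ∈ 𝓝 (1 : G), IsClosed U ∧ U⁻¹ = U ∧ U * U ⊆ A ∧ ∀ g ∈ K, ∀ x ∈ U, g * x * g⁻¹ ∈ A := by
  obtain ⟨D, hD, hKD⟩ := hK.exists_nhds_one_conj_subset hA
  obtain ⟨U, hU, hUc, hUinv, hUU⟩ := exists_closed_nhds_one_inv_eq_mul_subset (inter_mem hA hD)
  have hUD : U ⊆ D := fun x hx =>
    (hUU (mul_one x ▸ mul_mem_mul hx (mem_of_mem_nhds hU))).2
  exact ⟨U, hU, hUc, hUinv, hUU.trans inter_subset_left, fun g hg x hx => hKD g hg x (hUD hx)⟩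

variable [SigmaCompactSpace G]

variable (G) in
structure IsKakutaniKodairaSeq (U : ℕ → Set G) : Prop where
  mem_nhds : ∀ n, U n ∈ 𝓝 (1 : G)
  isClosed : ∀ n, IsClosed (U n)
  isCompact_zero : IsCompact (U 0)
  inv_succ : ∀ n, (U (n + 1))⁻¹ = U (n + 1)
  mul_succ_subset : ∀ n, U (n + 1) * U (n + 1) ⊆ U n
  conj_succ : ∀ n, ∀ g ∈ compactCovering G n, ∀ x ∈ U (n + 1), g * x * g⁻¹ ∈ U n

namespace IsKakutaniKodairaSeq

variable {U : ℕ → Set G}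

theorem one_mem (hU : IsKakutaniKodairaSeq G U) (n : ℕ) : (1 : G) ∈ U n :=
  mem_of_mem_nhds (hU.mem_nhds n)

theorem mul_mem (hU : IsKakutaniKodairaSeq G U) {n : ℕ} {x y : G} (hx : x ∈ U (n + 1))
    (hy : y ∈ U (n + 1)) : x * y ∈ U n :=
  hU.mul_succ_subset n (mul_mem_mul hx hy)

theorem antitone (hU : IsKakutaniKodairaSeq G U) : Antitone U :=
  antitone_nat_of_succ_le fun _ x hx => mul_one x ▸ hU.mul_mem hx (hU.one_mem _)

theorem isCompact (hU : IsKakutaniKodairaSeq G U) (n : ℕ) : IsCompact (U n) :=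
  hU.isCompact_zero.of_isClosed_subset (hU.isClosed n) (hU.antitone n.zero_le)

def subgroup (hU : IsKakutaniKodairaSeq G U) : Subgroup G where
  carrier := ⋂ n, U n
  one_mem' := mem_iInter.2 hU.one_mem
  mul_mem' ha hb := mem_iInter.2 fun n =>
    hU.mul_mem (mem_iInter.1 ha (n + 1)) (mem_iInter.1 hb (n + 1))
  inv_mem' {x} hx := mem_iInter.2 fun n => hU.antitone n.le_succ <| by
    rw [← hU.inv_succ n]; exact inv_mem_inv.2 (mem_iInter.1 hx (n + 1))

theorem isCompact_subgroup (hU : IsKakutaniKodairaSeq G U) : IsCompact (hU.subgroup : Set G) :=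
  hU.isCompact_zero.of_isClosed_subset (isClosed_iInter hU.isClosed) (iInter_subset _ 0)

theorem subgroup_normal (hU : IsKakutaniKodairaSeq G U) : hU.subgroup.Normal where
  conj_mem x hx g := by
    obtain ⟨m, hm⟩ := exists_mem_compactCovering g
    refine mem_iInter.2 fun n => hU.antitone (le_max_right m n) ?_
    exact hU.conj_succ _ g (compactCovering_subset G (le_max_left m n) hm) x
      (mem_iInter.1 hx _)

theorem mem_nhdsSet_subgroup [IsTopologicalGroup G] (hU : IsKakutaniKodairaSeq G U) (n : ℕ) :
    U n ∈ 𝓝ˢ (hU.subgroup : Set G) :=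
  mem_nhdsSet_iff_forall.2 fun x hx => by
    have hxU : x • U (n + 1) ∈ 𝓝 x := by
      simpa using (smul_mem_nhds_smul_iff x).2 (hU.mem_nhds (n + 1))
    refine mem_of_superset hxU ?_
    rintro _ ⟨y, hy, rfl⟩
    exact hU.mul_mem (mem_iInter.1 hx (n + 1)) hy

theorem isCountablyGenerated_nhdsSet_subgroup [IsTopologicalGroup G]
    (hU : IsKakutaniKodairaSeq G U) :
    (𝓝ˢ (hU.subgroup : Set G)).IsCountablyGenerated :=
  (hasAntitoneBasis_nhdsSet_iInter hU.antitone hU.isCompact hU.isClosed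
    hU.mem_nhdsSet_subgroup).isCountablyGenerated

end IsKakutaniKodairaSeq

theorem exists_isKakutaniKodairaSeq [IsTopologicalGroup G] [LocallyCompactSpace G]
    (A : ℕ → Set G) (hA : ∀ n, A n ∈ 𝓝 (1 : G)) :
    ∃ U, IsKakutaniKodairaSeq G U ∧ ∀ n, U (n + 1) ⊆ A n := by
  obtain ⟨K, hKc, hK⟩ := exists_compact_mem_nhds (1 : G)
  obtain ⟨U₀, hU₀, hU₀c, hU₀K⟩ := exists_mem_nhds_isClosed_subset hK
  choose F hF hFc hFinv hFmul hFconj using fun (n : ℕ) (S : {S : Set G // S ∈ 𝓝 (1 : G)}) =>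
    (isCompact_compactCovering G n).exists_closed_nhds_one_inv_eq_mul_subset_conj
      (inter_mem S.2 (hA n))
  let seq : ℕ → {S : Set G // S ∈ 𝓝 (1 : G)} :=
    fun n => Nat.rec ⟨U₀, hU₀⟩ (fun n S => ⟨F n S, hF n S⟩) n
  have hU : IsKakutaniKodairaSeq G fun n => (seq n).1 :=
    { mem_nhds := fun n => (seq n).2
      isClosed := fun n => n.casesOn hU₀c fun n => hFc n (seq n)
      isCompact_zero := hKc.of_isClosed_subset hU₀c hU₀K
      inv_succ := fun n => hFinv n (seq n)
      mul_succ_subset := fun n => (hFmul n (seq n)).trans inter_subset_left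
      conj_succ := fun n g hg x hx => (hFconj n (seq n) g hg x hx).1 }
  exact ⟨_, hU, fun n x hx =>
    (hFmul n (seq n) (mul_one x ▸ mul_mem_mul hx (hU.one_mem (n + 1)))).2⟩

theorem exists_compact_normal_subgroup_subset [IsTopologicalGroup G] [LocallyCompactSpace G]
    {ι : Type*} [Countable ι] (W : ι → Set G) (hW : ∀ i, W i ∈ 𝓝 (1 : G)) :
    ∃ N : Subgroup G, IsCompact (N : Set G) ∧ N.Normal ∧ (∀ i, (N : Set G) ⊆ W i) ∧
      (𝓝ˢ (N : Set G)).IsCountablyGenerated := by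
  obtain ⟨A, hA⟩ := ((countable_range W).insert univ).exists_eq_range (insert_nonempty _ _)
  have hAW : ∀ n, A n = univ ∨ A n ∈ range W := fun n => (hA.symm ▸ mem_range_self n :)
  obtain ⟨U, hU, hUA⟩ := exists_isKakutaniKodairaSeq A fun n => by
    rcases hAW n with h | ⟨i, hi⟩
    · exact h ▸ univ_mem
    · exact hi ▸ hW i
  refine ⟨hU.subgroup, hU.isCompact_subgroup, hU.subgroup_normal, fun i => ?_,
    hU.isCountablyGenerated_nhdsSet_subgroup⟩
  obtain ⟨n, hn⟩ : W i ∈ range A := hA ▸ mem_insert_of_mem _ (mem_range_self i)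
  exact (iInter_subset _ (n + 1)).trans (hn ▸ hUA n)

end KakutaniKodaira

theorem ENNReal.eq_zero_of_forall_lt_inv_natCast {a : ℝ≥0∞} (h : ∀ n : ℕ, a < (n : ℝ≥0∞)⁻¹) :
    a = 0 := by
  by_contra ha
  obtain ⟨n, hn⟩ := ENNReal.exists_inv_nat_lt ha
  exact (h n).not_gt hn

theorem MeasurableSet.exists_isSigmaCompact_subset_measure_sdiff_eq_zero {X : Type*}
    [TopologicalSpace X] [T2Space X] [MeasurableSpace X] [OpensMeasurableSpace X] {μ : Measure X}
    [μ.InnerRegularCompactLTTop] {A : Set X} (hA : MeasurableSet A) (h'A : μ A ≠ ∞) :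
    ∃ E ⊆ A, IsSigmaCompact E ∧ μ (A \ E) = 0 := by
  choose K hKA hKc hK using fun n : ℕ =>
    hA.exists_isCompact_sdiff_lt h'A (ENNReal.inv_ne_zero.2 (ENNReal.natCast_ne_top n))
  exact ⟨⋃ n, K n, iUnion_subset hKA, ⟨K, hKc, rfl⟩,
    ENNReal.eq_zero_of_forall_lt_inv_natCast fun n =>
      (measure_mono (sdiff_subset_sdiff_right (subset_iUnion K n))).trans_lt (hK n)⟩

theorem IsCompact.exists_nhds_one_measure_mul_lt {G : Type*} [Group G] [TopologicalSpace G]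
    [IsTopologicalGroup G] [MeasurableSpace G] {μ : Measure G} [μ.OuterRegular] {C : Set G}
    (hC : IsCompact C) {r : ℝ≥0∞} (hr : μ C < r) : ∃ W ∈ 𝓝 (1 : G), μ (C * W) < r := by
  obtain ⟨O, hCO, hO, hOr⟩ := C.exists_isOpen_lt_of_lt r hr
  obtain ⟨W, hW, hCW⟩ := compact_open_separated_mul_right hC hO hCO
  exact ⟨W, hW, (measure_mono hCW).trans_lt hOr⟩

theorem MeasureTheory.Measure.mconv_apply_eq_zero_of_disjoint {M : Type*} [Monoid M]
    [MeasurableSpace M] {μ ν : Measure M} [SFinite ν] {s t A : Set M} (hA : MeasurableSet A)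
    (hμ : μ sᶜ = 0) (hν : ν tᶜ = 0) (h : Disjoint (s * t) A) : μ.mconv ν A = 0 := by
  by_cases hm : AEMeasurable (fun p : M × M => p.1 * p.2) (μ.prod ν)
  · rw [Measure.mconv, Measure.map_apply_of_aemeasurable hm hA]
    refine measure_mono_null (t := (s ×ˢ t)ᶜ) (fun p hp hst => ?_) ?_
    · exact h.ne_of_mem (mul_mem_mul hst.1 hst.2) hp rfl
    · rw [compl_prod_eq_union]
      exact measure_union_null (by simp [Measure.prod_prod, hμ])
        (by simp [Measure.prod_prod, hν])
  · rw [Measure.mconv, Measure.map_of_not_aemeasurable hm, Measure.coe_zero, Pi.zero_apply]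

theorem MeasureTheory.Measure.mutuallySingular_mconv_of_measure_mul_subgroup {G : Type*}
    [Group G] [MeasurableSpace G] {μ μ' ρ : Measure G} [SFinite ρ] (H : Subgroup G) {s : Set G}
    (hs : MeasurableSet (s * (H : Set G))) (hμ : μ sᶜ = 0) (hμ' : μ' (s * (H : Set G)) = 0)
    (hρ : ρ (H : Set G)ᶜ = 0) : μ.mconv ρ ⟂ₘ μ'.mconv ρ := by
  refine ⟨(s * (H : Set G))ᶜ, hs.compl, mconv_apply_eq_zero_of_disjoint hs.compl hμ hρ
    disjoint_compl_right, ?_⟩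
  refine mconv_apply_eq_zero_of_disjoint (s := (s * (H : Set G))ᶜ) hs.compl.compl
    (by rwa [compl_compl]) hρ ?_
  rw [compl_compl, Set.disjoint_left]
  rintro _ ⟨x, hx, h, hh, rfl⟩ ⟨y, hy, h', hh', hyx : y * h' = x * h⟩
  exact hx ⟨y, hy, h' * h⁻¹, H.mul_mem hh' (H.inv_mem hh), show y * (h' * h⁻¹) = x by
    rw [← mul_assoc, hyx, mul_inv_cancel_right]⟩

theorem MeasureTheory.Measure.map_mul_right_eq_self_of_compactSpace {H : Type*} [Group H]
    [TopologicalSpace H] [IsTopologicalGroup H] [CompactSpace H] [MeasurableSpace H]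
    [BorelSpace H] (μ : Measure H) [μ.IsHaarMeasure] [IsProbabilityMeasure μ] (h : H) :
    μ.map (· * h) = μ :=
  have := isProbabilityMeasure_map (μ := μ) (measurable_mul_const h).aemeasurable
  isHaarMeasure_eq_of_isProbabilityMeasure _ _

theorem Subgroup.exists_isProbabilityMeasure_invariant {G : Type*} [Group G]
    [TopologicalSpace G] [IsTopologicalGroup G] [T2Space G] [MeasurableSpace G] [BorelSpace G]
    (N : Subgroup G) (hN : IsCompact (N : Set G)) :
    ∃ ρ : Measure G, IsProbabilityMeasure ρ ∧ ρ (N : Set G)ᶜ = 0 ∧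
      (∀ g ∈ N, ρ.map (g * ·) = ρ) ∧ (∀ g ∈ N, ρ.map (· * g) = ρ) := by
  have : CompactSpace N := isCompact_iff_compactSpace.mp hN
  have : BorelSpace N := Subtype.borelSpace _
  let μ : Measure N := Measure.haarMeasure ⊤
  have : IsProbabilityMeasure μ :=
    ⟨by rw [← TopologicalSpace.PositiveCompacts.coe_top]; exact Measure.haarMeasure_self⟩
  have hval : Measurable ((↑) : N → G) := continuous_subtype_val.measurable
  refine ⟨μ.map (↑), Measure.isProbabilityMeasure_map hval.aemeasurable, ?_, fun g hg => ?_,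
    fun g hg => ?_⟩
  · rw [Measure.map_apply hval hN.isClosed.measurableSet.compl, preimage_compl,
      Subtype.coe_preimage_self, compl_univ, measure_empty]
  · rw [Measure.map_map (measurable_const_mul g) hval]
    have : (g * ·) ∘ ((↑) : N → G) = (↑) ∘ ((⟨g, hg⟩ : N) * ·) := rfl
    rw [this, ← Measure.map_map hval (measurable_const_mul _), map_mul_left_eq_self]
  · rw [Measure.map_map (measurable_mul_const g) hval]
    have : (· * g) ∘ ((↑) : N → G) = (↑) ∘ (· * (⟨g, hg⟩ : N)) := rfl
    rw [this, ← Measure.map_map hval (measurable_mul_const _),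
      Measure.map_mul_right_eq_self_of_compactSpace]

theorem stmt_12_general {G : Type u} [Group G] [TopologicalSpace G] [IsTopologicalGroup G]
    [LocallyCompactSpace G] [T2Space G] [SigmaCompactSpace G]
    [MeasurableSpace G] [BorelSpace G]
    (ν ν' : Measure G) [IsFiniteMeasure ν] [ν.Regular] [ν'.Regular]
    (hsing : ν ⟂ₘ ν') (V : Set G) (hV : V ∈ 𝓝 (1 : G)) :
    ∃ (E : Set G) (N : Subgroup G) (lamN : Measure G),
      (∃ C : ℕ → Set G, (∀ n, IsCompact (C n)) ∧ E = ⋃ n, C n) ∧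
      IsCompact (N : Set G) ∧ N.Normal ∧ (N : Set G) ⊆ V ∧
      localWeight (G ⧸ N) (QuotientGroup.mk 1) ≤ Cardinal.aleph0 ∧
      IsProbabilityMeasure lamN ∧ lamN ((N : Set G))ᶜ = 0 ∧
      (∀ g ∈ N, lamN.map (g * ·) = lamN) ∧ (∀ g ∈ N, lamN.map (· * g) = lamN) ∧
      ν E = ν Set.univ ∧ ν' (E * (N : Set G)) = 0 ∧
      ν.mconv lamN ⟂ₘ ν'.mconv lamN := by
  obtain ⟨T, hT, hνT, hν'T⟩ := hsing
  obtain ⟨E, hET, ⟨K, hK, rfl⟩, hνE⟩ :=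
    hT.compl.exists_isSigmaCompact_subset_measure_sdiff_eq_zero (μ := ν) (measure_ne_top _ _)
  have hνEc : ν (⋃ k, K k)ᶜ = 0 := measure_mono_null
    (fun x hx => (em (x ∈ T)).imp id fun hxT => ⟨hxT, hx⟩) (measure_union_null hνT hνE)
  choose W hW hKW using fun p : ℕ × ℕ => (hK p.1).exists_nhds_one_measure_mul_lt (μ := ν')
    ((measure_mono_null ((subset_iUnion K p.1).trans hET) hν'T).trans_lt
      (ENNReal.inv_pos.2 (ENNReal.natCast_ne_top p.2)))
  obtain ⟨N, hNc, hNn, hNW, hNcg⟩ :=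
    exists_compact_normal_subgroup_subset (fun p => V ∩ W p) fun p => inter_mem hV (hW p)
  have hν'EN : ν' ((⋃ k, K k) * N) = 0 := by
    rw [iUnion_mul]
    exact measure_iUnion_null fun k => ENNReal.eq_zero_of_forall_lt_inv_natCast fun n =>
      (measure_mono (mul_subset_mul_left ((hNW (k, n)).trans inter_subset_right))).trans_lt
        (hKW (k, n))
  have hENm : MeasurableSet ((⋃ k, K k) * (N : Set G)) := by
    rw [iUnion_mul]
    exact .iUnion fun k => ((hK k).mul hNc).isClosed.measurableSet
  obtain ⟨ρ, hρ, hρN, hρl, hρr⟩ := N.exists_isProbabilityMeasure_invariant hNc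
  have := QuotientGroup.isCountablyGenerated_nhds_mk_one N
  exact ⟨⋃ k, K k, N, ρ, ⟨K, hK, rfl⟩, hNc, hNn, fun x hx => (hNW (0, 0) hx).1,
    localWeight_le_aleph0 _, hρ, hρN, hρl, hρr, measure_congr (ae_eq_univ.2 hνEc), hν'EN,
    Measure.mutuallySingular_mconv_of_measure_mul_subgroup N hENm hνEc hν'EN hρN⟩

/-- Let `G` be a σ-compact locally compact group, `ν ⊥ ν'` nonnegative
bounded Radon measures on `G`, and `V` a neighbourhood of the identity. Then there exist a
`K_σ`-set `E ⊆ G` and a compact normal subgroup `N ⊆ V` with metrizable quotient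
(`χ(G/N) ≤ ℵ₀`) such that `ν(E) = ν(G)`, `ν'(E·N) = 0`, and consequently
`ν ∗ λ_N ⊥ ν' ∗ λ_N`, where `λ_N` is the normalized Haar measure of `N` (characterized as
the `N`-bi-invariant probability measure carried by `N`). -/
theorem stmt_12 {G : Type u} [Group G] [TopologicalSpace G] [IsTopologicalGroup G]
    [LocallyCompactSpace G] [T2Space G] [SigmaCompactSpace G]
    [MeasurableSpace G] [BorelSpace G]
    (ν ν' : Measure G) [IsFiniteMeasure ν] [IsFiniteMeasure ν'] [ν.Regular] [ν'.Regular]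
    (hsing : ν ⟂ₘ ν') (V : Set G) (hV : V ∈ 𝓝 (1 : G)) :
    ∃ (E : Set G) (N : Subgroup G) (lamN : Measure G),
      (∃ C : ℕ → Set G, (∀ n, IsCompact (C n)) ∧ E = ⋃ n, C n) ∧
      IsCompact (N : Set G) ∧ N.Normal ∧ (N : Set G) ⊆ V ∧
      localWeight (G ⧸ N) (QuotientGroup.mk 1) ≤ Cardinal.aleph0 ∧
      IsProbabilityMeasure lamN ∧ lamN ((N : Set G))ᶜ = 0 ∧
      (∀ g ∈ N, lamN.map (g * ·) = lamN) ∧ (∀ g ∈ N, lamN.map (· * g) = lamN) ∧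
      ν E = ν Set.univ ∧ ν' (E * (N : Set G)) = 0 ∧
      ν.mconv lamN ⟂ₘ ν'.mconv lamN :=
  stmt_12_general ν ν' hsing V hV
end

section
/- Let M be a Banach algebra and M₁ a closed subspace such that there exists h ∈ M* with {𝔫 ⊙ h : 𝔫 ∈ unit ball of M**} ⊇ unit ball of M₁° (the annihilator of M₁). Then the left topological centre Z_t(M**) is contained in M + M₁**, where M₁** is identified with the double annihilator M₁°° in M**. -/
open NormedSpace ContinuousLinearMap

variable (M : Type*) [NonUnitalNormedRing M] [NormedSpace ℝ M]
  [IsScalarTower ℝ M M] [SMulCommClass ℝ M M]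

/-- The right action of `M` on `M*`: `⟨h · μ, ν⟩ = ⟨h, μ ∗ ν⟩`. -/
noncomputable def hdot (h : StrongDual ℝ M) (μ : M) : StrongDual ℝ M :=
  h.comp (mul ℝ M μ)

/-- The left action `⊙` of `M**` on `M*`: `⟨𝔫 ⊙ h, μ⟩ = ⟨𝔫, h · μ⟩`. -/
noncomputable def odot (n : StrongDual ℝ (StrongDual ℝ M)) (h : StrongDual ℝ M) : StrongDual ℝ M :=
  LinearMap.mkContinuous
    { toFun := fun μ => n (hdot M h μ)
      map_add' := fun x y => by simp [hdot, map_add, ContinuousLinearMap.comp_add]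
      map_smul' := fun c x => by simp [hdot, map_smul, ContinuousLinearMap.comp_smul] }
    (‖n‖ * ‖h‖)
    (fun μ => by
      calc ‖n (hdot M h μ)‖ ≤ ‖n‖ * ‖hdot M h μ‖ := n.le_opNorm _
        _ ≤ ‖n‖ * (‖h‖ * ‖μ‖) := by
            refine mul_le_mul_of_nonneg_left ?_ (norm_nonneg n)
            calc ‖hdot M h μ‖ ≤ ‖h‖ * ‖mul ℝ M μ‖ := opNorm_comp_le _ _
              _ ≤ ‖h‖ * ‖μ‖ :=
                mul_le_mul_of_nonneg_left (opNorm_mul_apply_le ℝ M μ) (norm_nonneg h)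
        _ = ‖n‖ * ‖h‖ * ‖μ‖ := (mul_assoc _ _ _).symm)

@[simp] lemma odot_apply (n : StrongDual ℝ (StrongDual ℝ M)) (h : StrongDual ℝ M) (μ : M) :
    odot M n h μ = n (hdot M h μ) := rfl

lemma odot_norm_le (n : StrongDual ℝ (StrongDual ℝ M)) (h : StrongDual ℝ M) :
    ‖odot M n h‖ ≤ ‖n‖ * ‖h‖ :=
  LinearMap.mkContinuous_norm_le _ (by positivity) _

/-- The first (left) Arens product on `M**`: `⟨𝔪 □ 𝔫, h⟩ = ⟨𝔪, 𝔫 ⊙ h⟩`. -/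
noncomputable def arens (m n : StrongDual ℝ (StrongDual ℝ M)) : StrongDual ℝ (StrongDual ℝ M) :=
  LinearMap.mkContinuous
    { toFun := fun h => m (odot M n h)
      map_add' := fun h h' => by
        have : odot M n (h + h') = odot M n h + odot M n h' := by
          ext μ; simp [hdot, ContinuousLinearMap.add_comp]
        show m (odot M n (h + h')) = m (odot M n h) + m (odot M n h')
        rw [this, map_add]
      map_smul' := fun c h => by
        have : odot M n (c • h) = c • odot M n h := by
          ext μ; simp [hdot, ContinuousLinearMap.smul_comp]
        show m (odot M n (c • h)) = (RingHom.id ℝ) c • m (odot M n h)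
        rw [this, map_smul]; rfl }
    (‖m‖ * ‖n‖)
    (fun h => by
      calc ‖m (odot M n h)‖ ≤ ‖m‖ * ‖odot M n h‖ := m.le_opNorm _
        _ ≤ ‖m‖ * (‖n‖ * ‖h‖) :=
            mul_le_mul_of_nonneg_left (odot_norm_le M n h) (norm_nonneg m)
        _ = ‖m‖ * ‖n‖ * ‖h‖ := (mul_assoc _ _ _).symm)

@[simp] lemma arens_apply (m n : StrongDual ℝ (StrongDual ℝ M)) (h : StrongDual ℝ M) :
    arens M m n h = m (odot M n h) := rfl

/-!
Put `Q = M ⧸ M₁`, so that `M₁° = Q*` and `m` restricts to some `Φ ∈ Q**`. Since `𝔫 ↦ 𝔫 ⊙ h` and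
`𝔫 ↦ m(𝔫 ⊙ h) = (m □ 𝔫)(h)` are weak*-continuous, the image under `𝔫 ↦ 𝔫 ⊙ h` of the
weak*-compact set `{‖𝔫‖ ≤ 1, |m(𝔫 ⊙ h)| ≥ ε}` is weak*-compact and misses `0`, so it avoids a
weak*-neighbourhood `{g | g = 0 on I}` of `0`, with `I ⊆ M` finite. As every `g` in the unit
ball of `M₁°` is some `𝔫 ⊙ h`, `|m g| < ε` on that ball wherever `g` vanishes on `I`.
Hahn–Banach then puts `Φ` within `ε` of `Q ⊆ Q**`; since `Q` is complete it is closed in `Q**`,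
so `Φ` is evaluation at a point of `Q`.
-/

open Topology

theorem WeakDual.exists_finset_subset_of_mem_nhds_zero {𝕜 E : Type*} [NormedField 𝕜]
    [AddCommGroup E] [TopologicalSpace E] [Module 𝕜 E]
    {U : Set (WeakDual 𝕜 E)} (hU : U ∈ 𝓝 0) :
    ∃ I : Finset E, {f : WeakDual 𝕜 E | ∀ x ∈ I, f x = 0} ⊆ U := by
  obtain ⟨V, hV, hVU⟩ := (LinearMap.hasBasis_weakBilin (topDualPairing 𝕜 E)).mem_iff.1 hU
  obtain ⟨I, r, hr, rfl⟩ := (SeminormFamily.basisSets_iff _).1 hV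
  refine ⟨I, fun f hf => hVU ((Seminorm.mem_ball_zero _).2 ?_)⟩
  exact Seminorm.finset_sup_apply_lt (p := (topDualPairing 𝕜 E).toSeminormFamily) hr
    fun x hx => show ‖f x‖ < r by rwa [hf x hx, norm_zero]

theorem Submodule.norm_mkQL_le {𝕜 E : Type*} [NontriviallyNormedField 𝕜]
    [SeminormedAddCommGroup E] [NormedSpace 𝕜 E] (S : Submodule 𝕜 E) : ‖S.mkQL‖ ≤ 1 :=
  opNorm_le_bound _ zero_le_one fun x => by simpa using Submodule.Quotient.norm_mk_le S x

section DoubleDual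

variable {𝕜 E : Type*} [RCLike 𝕜] [NormedAddCommGroup E] [NormedSpace 𝕜 E]

theorem exists_norm_sub_inclusionInDoubleDual_le (Φ : StrongDual 𝕜 (StrongDual 𝕜 E))
    (I : Finset E) {ε : ℝ} (hε : 0 ≤ ε)
    (hΦ : ∀ f : StrongDual 𝕜 E, ‖f‖ ≤ 1 → (∀ x ∈ I, f x = 0) → ‖Φ f‖ ≤ ε) :
    ∃ x : E, ‖Φ - inclusionInDoubleDual 𝕜 E x‖ ≤ ε := by
  let L : I → StrongDual 𝕜 E →ₗ[𝕜] 𝕜 := fun x => (inclusionInDoubleDual 𝕜 E x).toLinearMap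
  let S : Submodule 𝕜 (StrongDual 𝕜 E) := ⨅ x, LinearMap.ker (L x)
  have hS : ∀ f ∈ S, ∀ x ∈ I, f x = 0 := fun f hf x hx => by
    simpa [S, L] using Submodule.mem_iInf _ |>.mp hf ⟨x, hx⟩
  obtain ⟨Ψ, hΨΦ, hΨ⟩ := exists_extension_norm_eq S (Φ.comp S.subtypeL)
  have hΨε : ‖Ψ‖ ≤ ε := hΨ ▸ opNorm_le_of_unit_norm hε fun f hf =>
    hΦ f hf.le (hS f f.2)
  have hspan : (Φ - Ψ).toLinearMap ∈ Submodule.span 𝕜 (Set.range L) :=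
    mem_span_of_iInf_ker_le_ker fun f hf => by simp [hΨΦ ⟨f, hf⟩]
  obtain ⟨c, hc⟩ := (Submodule.mem_span_range_iff_exists_fun 𝕜).1 hspan
  refine ⟨∑ x, c x • (x : E), le_of_eq_of_le (congrArg norm ?_) hΨε⟩
  ext f
  have hf : ∑ x, c x * f x = Φ f - Ψ f := by simpa [L] using congr($hc f)
  simp only [sub_apply, map_sum, map_smul, sum_apply, smul_apply, dual_def, smul_eq_mul, hf,
    sub_sub_cancel]

theorem exists_inclusionInDoubleDual_eq_of_forall_finset [CompleteSpace E]
    (Φ : StrongDual 𝕜 (StrongDual 𝕜 E))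
    (hΦ : ∀ ε > 0, ∃ I : Finset E,
      ∀ f : StrongDual 𝕜 E, ‖f‖ ≤ 1 → (∀ x ∈ I, f x = 0) → ‖Φ f‖ ≤ ε) :
    ∃ x : E, inclusionInDoubleDual 𝕜 E x = Φ := by
  have hclosed : IsClosed (Set.range (inclusionInDoubleDual 𝕜 E)) :=
    (inclusionInDoubleDualLi (E := E) 𝕜).isometry.isUniformInducing.isComplete_range.isClosed
  refine hclosed.closure_subset
    ((Metric.mem_closure_iff (α := StrongDual 𝕜 (StrongDual 𝕜 E))).2 fun ε hε => ?_)
  obtain ⟨I, hI⟩ := hΦ (ε / 2) (half_pos hε)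
  obtain ⟨x, hx⟩ := exists_norm_sub_inclusionInDoubleDual_le Φ I (half_pos hε).le hI
  refine ⟨_, Set.mem_range_self x, ?_⟩
  calc dist Φ (inclusionInDoubleDual 𝕜 E x) = ‖Φ - inclusionInDoubleDual 𝕜 E x‖ :=
        dist_eq_norm (E := StrongDual 𝕜 (StrongDual 𝕜 E)) _ _
    _ < ε := hx.trans_lt (half_lt_self hε)

end DoubleDual

section ArensCentre

variable {M}

theorem continuous_odot_left (h : StrongDual ℝ M) :
    Continuous fun n : WeakDual ℝ (StrongDual ℝ M) =>
      StrongDual.toWeakDual (odot M (WeakDual.toStrongDual n) h) :=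
  WeakDual.continuous_of_continuous_eval fun μ => WeakDual.eval_continuous (hdot M h μ)

theorem exists_finset_norm_lt_of_continuous_arens (h : StrongDual ℝ M)
    {m : StrongDual ℝ (StrongDual ℝ M)}
    (hm : Continuous fun n : WeakDual ℝ (StrongDual ℝ M) =>
      StrongDual.toWeakDual (arens M m (WeakDual.toStrongDual n)))
    {ε : ℝ} (hε : 0 < ε) :
    ∃ I : Finset M, ∀ n : StrongDual ℝ (StrongDual ℝ M), ‖n‖ ≤ 1 →
      (∀ μ ∈ I, odot M n h μ = 0) → ‖m (odot M n h)‖ < ε := by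
  let W : Set (WeakDual ℝ (StrongDual ℝ M)) := WeakDual.toStrongDual ⁻¹' Metric.closedBall 0 1 ∩
    {n | ε ≤ ‖m (odot M (WeakDual.toStrongDual n) h)‖}
  have hW : IsCompact W :=
    (WeakDual.isCompact_closedBall 0 1).inter_right <|
      isClosed_le continuous_const (continuous_norm.comp ((WeakDual.eval_continuous h).comp hm))
  have h0 : 0 ∉ (fun n => StrongDual.toWeakDual (odot M (WeakDual.toStrongDual n) h)) '' W := by
    rintro ⟨n, ⟨-, hn : ε ≤ ‖m (odot M (WeakDual.toStrongDual n) h)‖⟩, hn0⟩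
    rw [StrongDual.toWeakDual.injective (hn0.trans (map_zero _).symm), map_zero,
      norm_zero] at hn
    exact hn.not_gt hε
  obtain ⟨I, hI⟩ := WeakDual.exists_finset_subset_of_mem_nhds_zero
    ((hW.image (continuous_odot_left h)).isClosed.isOpen_compl.mem_nhds h0)
  refine ⟨I, fun n hn hnI => not_le.1 fun hmn =>
    hI hnI ⟨StrongDual.toWeakDual n, ⟨?_, hmn⟩, rfl⟩⟩
  exact (mem_closedBall_zero_iff (E := StrongDual ℝ (StrongDual ℝ M))).2 hn

end ArensCentre

/-- Let `M` be a Banach algebra and `M₁` a closed subspace such that some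
`h ∈ M*` satisfies `{𝔫 ⊙ h : 𝔫 ∈ unit ball of M**} ⊇ unit ball of M₁°`. Then every element
`m` of the left topological centre of `M**` (i.e. `n ↦ m □ n` is weak*-weak* continuous)
lies in `M + M₁**`: there is `μ ∈ M` with `m - ι μ` vanishing on the annihilator `M₁°`,
i.e. `m - ι μ ∈ M₁°° = M₁**`. -/
theorem stmt_17 [CompleteSpace M] (M₁ : Submodule ℝ M) (hM₁ : IsClosed (M₁ : Set M))
    (h : StrongDual ℝ M)
    (hfact : ∀ g : StrongDual ℝ M, ‖g‖ ≤ 1 → (∀ ν ∈ M₁, g ν = 0) →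
      ∃ n : StrongDual ℝ (StrongDual ℝ M), ‖n‖ ≤ 1 ∧ odot M n h = g)
    (m : StrongDual ℝ (StrongDual ℝ M))
    (hm : Continuous fun n : WeakDual ℝ (StrongDual ℝ M) =>
      StrongDual.toWeakDual (arens M m (WeakDual.toStrongDual n))) :
    ∃ μ : M, ∀ g : StrongDual ℝ M, (∀ ν ∈ M₁, g ν = 0) → m g = g μ := by
  classical
  let q := M₁.mkQL
  let Φ : StrongDual ℝ (StrongDual ℝ (M ⧸ M₁)) := m.comp ((compL ℝ M (M ⧸ M₁) ℝ).flip q)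
  obtain ⟨x, hx⟩ := exists_inclusionInDoubleDual_eq_of_forall_finset Φ fun ε hε => by
    obtain ⟨I, hI⟩ := exists_finset_norm_lt_of_continuous_arens h hm hε
    refine ⟨I.image q, fun f hf hfI => ?_⟩
    obtain ⟨n, hn, hnf⟩ := hfact (f.comp q)
      ((opNorm_comp_le f q).trans (mul_le_one₀ hf (norm_nonneg _) M₁.norm_mkQL_le))
      fun ν hν => by simp [q, (Submodule.Quotient.mk_eq_zero M₁).2 hν]
    have hΦf : Φ f = m (odot M n h) := by rw [hnf]; rfl
    rw [hΦf]
    exact (hI n hn fun μ hμ => by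
      rw [hnf]; exact hfI _ (Finset.mem_image_of_mem q hμ)).le
  obtain ⟨μ, rfl⟩ := M₁.mkQ_surjective x
  refine ⟨μ, fun g hg => ?_⟩
  let g' := M₁.liftQL g fun ν hν => hg ν hν
  have hg' : g'.comp q = g := by ext; rfl
  calc m g = Φ g' := by rw [← hg']; rfl
    _ = g μ := by rw [← hx]; rfl
end

section
/- Let G be a Polish group that is not locally compact, and let μ be a finite Borel measure on G. Then μ is 2^{ℵ₀}-thin: there exists a set P ⊆ G with |P| = 2^{ℵ₀} such that the right translates μ ∗ δ_p and μ ∗ δ_{p'} are mutually singular for all distinct p, p' ∈ P. -/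
/-!
A finite Borel measure on a Polish space is tight, so `μ` lives on a σ-compact set `A`, and
`μ ∗ δ_p ⟂ μ ∗ δ_q` as soon as `p q⁻¹ ∉ A⁻¹A`. In a group that is not locally compact every
compact set is nowhere dense, so `A⁻¹A` is a countable union of closed nowhere dense sets. A
Cantor scheme in the spirit of Mycielski's theorem then yields continuum many points whose
pairwise quotients `p q⁻¹` all avoid `A⁻¹A`: at level `n` the `2ⁿ` balls are chosen generically
in the product, where the tuples with some pair in the `n`-th closed set form a closed set with
empty interior.
-/

open MeasureTheory Topology TopologicalSpace Metric Set Filter Pointwise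

section Relation

variable {X ι : Type*} {R : Set (X × X)}

theorem setOf_pairwise_notMem_eq_iInter :
    {z : ι → X | Pairwise fun i j => (z i, z j) ∉ R} =
      ⋂ p : {p : ι × ι // p.1 ≠ p.2}, {z | (z p.1.1, z p.1.2) ∉ R} := by
  ext z
  simp [Pairwise]

variable [TopologicalSpace X]

theorem interior_setOf_apply_mem_eq_empty (hR : ∀ y, interior {x | (x, y) ∈ R} = ∅)
    {i j : ι} (hij : i ≠ j) : interior {z : ι → X | (z i, z j) ∈ R} = ∅ := by
  classical
  refine eq_empty_of_forall_notMem fun z hz => ?_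
  have hnhds : Function.update z i ⁻¹' {z | (z i, z j) ∈ R} ∈ 𝓝 (z i) := by
    have hcont : Continuous (Function.update z i) := by fun_prop
    refine hcont.continuousAt.preimage_mem_nhds ?_
    simpa using mem_interior_iff_mem_nhds.1 hz
  have hsection : Function.update z i ⁻¹' {z | (z i, z j) ∈ R} ⊆ {x | (x, z j) ∈ R} := by
    intro x hx
    simpa [Function.update_of_ne hij.symm] using hx
  simpa [hR] using interior_mono hsection (mem_interior_iff_mem_nhds.2 hnhds)

theorem isOpen_setOf_pairwise_notMem [Finite ι] (hRc : IsClosed R) :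
    IsOpen {z : ι → X | Pairwise fun i j => (z i, z j) ∉ R} := by
  rw [setOf_pairwise_notMem_eq_iInter]
  exact isOpen_iInter_of_finite fun p => hRc.isOpen_compl.preimage (by fun_prop)

theorem dense_setOf_pairwise_notMem [Finite ι] (hRc : IsClosed R)
    (hR : ∀ y, interior {x | (x, y) ∈ R} = ∅) :
    Dense {z : ι → X | Pairwise fun i j => (z i, z j) ∉ R} := by
  rw [setOf_pairwise_notMem_eq_iInter, ← sInter_range]
  refine (finite_range _).dense_sInter ?_ ?_ <;> rintro _ ⟨p, rfl⟩
  · exact hRc.isOpen_compl.preimage (by fun_prop)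
  · simpa [← compl_ofPred] using
      interior_eq_empty_iff_dense_compl.1 (interior_setOf_apply_mem_eq_empty hR p.2)

end Relation

section Metric

variable {X ι : Type*} [PseudoMetricSpace X] {R : Set (X × X)}

theorem exists_closedBall_subset_ball_pairwise_disjoint [Fintype ι] (hRc : IsClosed R)
    (hR : ∀ y, interior {x | (x, y) ∈ R} = ∅) (c : ι → X) {r δ : ℝ} (hr : 0 < r)
    (hδ : 0 < δ) :
    ∃ (y : ι → X) (ε : ℝ), 0 < ε ∧ ε ≤ δ ∧ (∀ i, closedBall (y i) ε ⊆ ball (c i) r) ∧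
      Pairwise fun i j => Disjoint (closedBall (y i) ε ×ˢ closedBall (y j) ε) R := by
  classical
  set O := univ.pi (fun i => ball (c i) r) ∩ {z : ι → X | Pairwise fun i j => (z i, z j) ∉ R}
  have hO : IsOpen O :=
    (isOpen_set_pi finite_univ fun _ _ => isOpen_ball).inter (isOpen_setOf_pairwise_notMem hRc)
  obtain ⟨y, hy⟩ : O.Nonempty :=
    (dense_setOf_pairwise_notMem hRc hR).inter_open_nonempty _
      (isOpen_set_pi finite_univ fun _ _ => isOpen_ball) ⟨c, fun i _ => mem_ball_self hr⟩
  obtain ⟨ε₀, hε₀, hball⟩ := Metric.isOpen_iff.1 hO y hy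
  set ε := min (ε₀ / 2) δ
  have hmem : ∀ z : ι → X, (∀ k, z k ∈ closedBall (y k) ε) → z ∈ O := fun z hz =>
    hball <| (dist_pi_lt_iff hε₀).2 fun k =>
      (hz k).trans_lt ((min_le_left _ _).trans_lt (half_lt_self hε₀))
  have hupdate : ∀ z : ι → X, (∀ k, z k ∈ closedBall (y k) ε) →
      ∀ i, ∀ u ∈ closedBall (y i) ε, ∀ k, Function.update z i u k ∈ closedBall (y k) ε := by
    intro z hz i u hu k
    rcases eq_or_ne k i with rfl | hki
    · simpa using hu
    · simpa [hki] using hz k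
  have hy_mem : ∀ k, y k ∈ closedBall (y k) ε := fun k =>
    mem_closedBall_self (le_min (half_pos hε₀).le hδ.le)
  refine ⟨y, ε, lt_min (half_pos hε₀) hδ, min_le_right _ _, fun i u hu => ?_, fun i j hij => ?_⟩
  · simpa using (hmem _ (hupdate y hy_mem i u hu)).1 i (mem_univ i)
  · refine Set.disjoint_left.2 ?_
    rintro ⟨u, v⟩ ⟨hu, hv⟩
    have := (hmem _ (hupdate _ (hupdate y hy_mem i u hu) j v hv)).2 hij
    simpa [Function.update_of_ne hij] using this

end Metric

section Cantor

open CantorScheme PiNat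

variable {X : Type*} [PseudoMetricSpace X]

theorem ediam_closedBall_le (x : X) (r : ℝ) : ediam (closedBall x r) ≤ ENNReal.ofReal (2 * r) :=
  ediam_le_of_forall_dist_le fun _ hy _ hz =>
    (dist_triangle_right _ _ x).trans (by linarith [mem_closedBall.1 hy, mem_closedBall.1 hz])

theorem exists_pairwise_notMem_of_interior_section_eq_empty [CompleteSpace X] [Nonempty X]
    {R : ℕ → Set (X × X)} (hmono : Monotone R) (hRc : ∀ n, IsClosed (R n))
    (hR : ∀ n y, interior {x | (x, y) ∈ R n} = ∅) :
    ∃ f : (ℕ → Bool) → X, Pairwise fun a b => ∀ n, (f a, f b) ∉ R n := by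
  classical
  obtain ⟨x₀⟩ := ‹Nonempty X›
  have step : ∀ n (p : (List.Vector Bool n → X) × ℝ), ∃ q : (List.Vector Bool (n + 1) → X) × ℝ,
      0 < p.2 → 0 < q.2 ∧ q.2 ≤ (1 / 2) ^ (n + 1) ∧
        (∀ v, closedBall (q.1 v) q.2 ⊆ closedBall (p.1 v.tail) p.2) ∧
        Pairwise fun v w => Disjoint (closedBall (q.1 v) q.2 ×ˢ closedBall (q.1 w) q.2) (R n) := by
    intro n p
    by_cases hp : 0 < p.2
    · obtain ⟨y, ε, hε, hεδ, hsub, hdisj⟩ := exists_closedBall_subset_ball_pairwise_disjoint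
        (hRc n) (hR n) (fun v : List.Vector Bool (n + 1) => p.1 v.tail) hp
        (δ := (1 / 2) ^ (n + 1)) (by positivity)
      exact ⟨(y, ε), fun _ => ⟨hε, hεδ, fun v => (hsub v).trans ball_subset_closedBall, hdisj⟩⟩
    · exact ⟨(fun _ => x₀, 1), fun h => absurd h hp⟩
  choose q hq using step
  -- Level `n` of the scheme: centres indexed by `List.Vector Bool n` and one common radius.
  -- Branches are read through `PiNat.res`, which lists `x (n-1), …, x 0`, so the parent of
  -- `a :: l` is `l`.
  let D : ∀ n, (List.Vector Bool n → X) × ℝ := fun n => Nat.rec (fun _ => x₀, 1) q n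
  have hpos : ∀ n, 0 < (D n).2 := by
    intro n
    induction n with
    | zero => exact one_pos
    | succ n ih => exact (hq n _ ih).1
  have hrad : ∀ n, (D n).2 ≤ (1 / 2) ^ n := by
    rintro (_ | n)
    · simp [D]
    · exact (hq n _ (hpos n)).2.1
  let A : List Bool → Set X := fun l => closedBall ((D l.length).1 ⟨l, rfl⟩) (D l.length).2
  have hA : ∀ n (v : List.Vector Bool n), A v.1 = closedBall ((D n).1 v) (D n).2 := by
    rintro n ⟨l, rfl⟩
    rfl
  have hAres : ∀ x n, A (res x n) = closedBall ((D n).1 ⟨res x n, res_length x n⟩) (D n).2 :=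
    fun x n => hA n ⟨res x n, res_length x n⟩
  have hanti : ClosureAntitone A := fun l a => by
    rw [isClosed_closedBall.closure_eq]
    exact (hq l.length _ (hpos _)).2.2.1 ⟨a :: l, rfl⟩
  have hdiam : VanishingDiam A := by
    intro x
    have hlim : Tendsto (fun n : ℕ => ENNReal.ofReal (2 * (1 / 2) ^ n)) atTop (𝓝 0) := by
      simpa using ENNReal.tendsto_ofReal
        ((tendsto_pow_atTop_nhds_zero_of_lt_one (r := (1 / 2 : ℝ)) (by norm_num)
          (by norm_num)).const_mul 2)
    refine tendsto_of_tendsto_of_tendsto_of_le_of_le tendsto_const_nhds hlim (fun _ => bot_le)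
      fun n => ?_
    rw [hAres]
    exact (ediam_closedBall_le _ _).trans (ENNReal.ofReal_le_ofReal (by linarith [hrad n]))
  have hdom := hanti.map_of_vanishingDiam hdiam fun l => nonempty_closedBall.2 (hpos _).le
  let f : (ℕ → Bool) → X := fun a => (inducedMap A).2 ⟨a, hdom ▸ mem_univ a⟩
  refine ⟨f, fun a b hab n hmem => ?_⟩
  obtain ⟨N, hN⟩ := Function.ne_iff.1 hab
  set m := max n N
  have hres : res a (m + 1) ≠ res b (m + 1) := fun h => hN (res_eq_res.1 h (by omega))
  have hdisj : Disjoint (A (res a (m + 1)) ×ˢ A (res b (m + 1))) (R m) := by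
    rw [hAres, hAres]
    exact (hq m (D m) (hpos m)).2.2.2 fun h => hres (congrArg Subtype.val h)
  exact Set.disjoint_left.1 hdisj ⟨map_mem _ (m + 1), map_mem _ (m + 1)⟩
    (hmono (le_max_left n N) hmem)

end Cantor

section Group

variable {G : Type*} [Group G] [TopologicalSpace G] [IsTopologicalGroup G]

theorem IsCompact.interior_eq_empty_of_not_locallyCompactSpace (hG : ¬ LocallyCompactSpace G)
    {K : Set G} (hK : IsCompact K) : interior K = ∅ :=
  eq_empty_of_forall_notMem fun _ hx =>
    hG (hK.locallyCompactSpace_of_mem_nhds_of_group (mem_interior_iff_mem_nhds.1 hx))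

theorem exists_injective_pairwise_mul_inv_notMem [IsCompletelyMetrizableSpace G]
    (hG : ¬ LocallyCompactSpace G) {A : Set G} (hA : IsSigmaCompact A) :
    ∃ f : (ℕ → Bool) → G, Function.Injective f ∧
      Pairwise fun a b => f a * (f b)⁻¹ ∉ A⁻¹ * A := by
  let := upgradeIsCompletelyMetrizable G
  obtain ⟨K, hK, rfl⟩ := hA
  -- `1 ∈ F n` is what makes `f` injective.
  set F : ℕ → Set G := fun n => insert 1 ((accumulate K n)⁻¹ * accumulate K n)
  have hFc : ∀ n, IsCompact (F n) := fun n =>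
    ((isCompact_accumulate hK n).inv.mul (isCompact_accumulate hK n)).insert 1
  have hFmono : Monotone F := fun m n hmn =>
    insert_subset_insert (mul_subset_mul (inv_subset_inv.2 (monotone_accumulate hmn))
      (monotone_accumulate hmn))
  have hsection : ∀ n y, interior {x | (x, y) ∈ {p : G × G | p.1 * p.2⁻¹ ∈ F n}} = ∅ := by
    intro n y
    change interior (Homeomorph.mulRight y⁻¹ ⁻¹' F n) = ∅
    rw [← Homeomorph.preimage_interior, (hFc n).interior_eq_empty_of_not_locallyCompactSpace hG,
      preimage_empty]
  obtain ⟨f, hf⟩ := exists_pairwise_notMem_of_interior_section_eq_empty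
    (R := fun n => {p : G × G | p.1 * p.2⁻¹ ∈ F n}) (fun m n hmn _ hp => hFmono hmn hp)
    (fun n => (hFc n).isClosed.preimage (by fun_prop)) hsection
  refine ⟨f, fun a b hab => ?_, fun a b hab hmem => ?_⟩
  · by_contra hne
    exact hf hne 0 (by simp [hab, F])
  · obtain ⟨x, hx, y, hy, hxy⟩ := hmem
    obtain ⟨i, hi⟩ := mem_iUnion.1 (mem_inv.1 hx)
    obtain ⟨j, hj⟩ := mem_iUnion.1 hy
    refine hf hab (max i j) (mem_insert_of_mem _ ⟨x, ?_, y, ?_, hxy⟩)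
    · exact mem_inv.2 (mem_accumulate.2 ⟨i, le_max_left i j, hi⟩)
    · exact mem_accumulate.2 ⟨j, le_max_right i j, hj⟩

end Group

section Measure

variable {X : Type*} [TopologicalSpace X] [MeasurableSpace X]

theorem IsSigmaCompact.measurableSet [T2Space X] [OpensMeasurableSpace X] {A : Set X}
    (hA : IsSigmaCompact A) : MeasurableSet A := by
  obtain ⟨K, hK, rfl⟩ := hA
  exact MeasurableSet.iUnion fun n => (hK n).measurableSet

theorem exists_isSigmaCompact_measure_compl_eq_zero [IsCompletelyPseudoMetrizableSpace X]
    [SecondCountableTopology X] [BorelSpace X] (μ : Measure X) [IsFiniteMeasure μ] :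
    ∃ A, IsSigmaCompact A ∧ μ Aᶜ = 0 := by
  have htight := isTightMeasureSet_iff_exists_isCompact_measure_compl_le.1
    (isTightMeasureSet_singleton (μ := μ))
  choose K hK hμK using fun n : ℕ =>
    htight (n : ENNReal)⁻¹ (ENNReal.inv_pos.2 (ENNReal.natCast_ne_top n))
  refine ⟨⋃ n, K n, ⟨K, hK, rfl⟩, le_zero_iff.1 <|
    ge_of_tendsto' ENNReal.tendsto_inv_nat_nhds_zero fun n => ?_⟩
  exact (measure_mono (compl_subset_compl.2 (subset_iUnion K n))).trans (hμK n μ rfl)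

end Measure

theorem MeasureTheory.Measure.mutuallySingular_map_mul_right {G : Type*} [Group G]
    [MeasurableSpace G] [MeasurableMul G] {μ : Measure G} {A : Set G} (hA : MeasurableSet A)
    (hμA : μ Aᶜ = 0) {p q : G} (hpq : p * q⁻¹ ∉ A⁻¹ * A) : μ.map (· * p) ⟂ₘ μ.map (· * q) := by
  have hs : MeasurableSet ((· * q⁻¹) ⁻¹' A) := measurable_mul_const _ hA
  refine ⟨_, hs, ?_, ?_⟩
  · rw [Measure.map_apply (measurable_mul_const p) hs]
    refine measure_mono_null (fun x hx hxA => hpq ⟨x⁻¹, inv_mem_inv.2 hxA, _, hx, ?_⟩) hμA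
    group
  · rw [Measure.map_apply (measurable_mul_const q) hs.compl]
    convert hμA using 2
    ext
    simp

/-- Let `G` be a Polish group that is not locally compact, and `μ` a
finite Borel measure on `G`. Then `μ` is `2^{ℵ₀}`-thin: there is a set `P ⊆ G` of
cardinality continuum whose right translates of `μ` are pairwise mutually singular. -/
theorem stmt_19 {G : Type u} [Group G] [TopologicalSpace G] [IsTopologicalGroup G]
    [PolishSpace G] [MeasurableSpace G] [BorelSpace G]
    (hnlc : ¬ LocallyCompactSpace G)
    (μ : Measure G) [IsFiniteMeasure μ] :
    ∃ P : Set G, Cardinal.mk P = Cardinal.continuum ∧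
      P.Pairwise fun p p' => μ.map (· * p) ⟂ₘ μ.map (· * p') := by
  obtain ⟨A, hA, hμA⟩ := exists_isSigmaCompact_measure_compl_eq_zero μ
  obtain ⟨f, hf_inj, hf⟩ := exists_injective_pairwise_mul_inv_notMem hnlc hA
  refine ⟨range f, ?_, ?_⟩
  · simpa [Cardinal.power_def] using Cardinal.mk_range_eq_of_injective hf_inj
  · rintro _ ⟨a, rfl⟩ _ ⟨b, rfl⟩ hab
    exact Measure.mutuallySingular_map_mul_right hA.measurableSet hμA
      (hf fun h => hab (congrArg f h))
end
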